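/- arXiv:1809.07816 — 8 statements merged into one kernel-verified Lean document; each statement's English description precedes it below -/
import Mathlib

section
/- Let n ≥ 1. A nonempty subset S of Z_{2n} is a subalgebra of Z_{2n} if and only if S = U ∪ (−U) for some nonempty subset U of {1,…,n}. Moreover, in that case |S| = 2|U| and there is a bijective homomorphism from S onto Z_{2|U|}; in particular every proper subalgebra of Z_{2n} is isomorphic to Z_{2m} for some m < n. -/
/-- Sugihara implication on the integers. -/
def SImp (a b : ℤ) : ℤ := if a ≤ b then max (-a) b else min (-a) b

/-- The universe of the Sugihara algebra `Z_{2n+1}`. -/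
def Zodd (n : ℕ) : Set ℤ := {a : ℤ | -(n : ℤ) ≤ a ∧ a ≤ (n : ℤ)}

/-- The universe of the Sugihara algebra `Z_{2n}`. -/
def Zeven (n : ℕ) : Set ℤ := {a : ℤ | (-(n : ℤ) ≤ a ∧ a ≤ (n : ℤ)) ∧ a ≠ 0}

/-- `S` is a subalgebra of (the subset `Z` of) the Sugihara algebra on `ℤ`. -/
def Subalg (Z S : Set ℤ) : Prop :=
  S.Nonempty ∧ S ⊆ Z ∧
    ∀ a ∈ S, ∀ b ∈ S, min a b ∈ S ∧ max a b ∈ S ∧ -a ∈ S ∧ SImp a b ∈ S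

/-- `h` is a homomorphism from `S` to `T` (preserving ∧, ∨, ¬, →). -/
def SHom (S T : Set ℤ) (h : ℤ → ℤ) : Prop :=
  Set.MapsTo h S T ∧
    ∀ a ∈ S, ∀ b ∈ S,
      h (min a b) = min (h a) (h b) ∧ h (max a b) = max (h a) (h b) ∧
      h (-a) = -h a ∧ h (SImp a b) = SImp (h a) (h b)

/-!
Every Sugihara operation returns one of its arguments or the negation of one, so a subset of `ℤ`
is a subalgebra as soon as it is closed under negation; a subalgebra of `Z_{2n}` misses `0` and is
therefore determined by its positive part `U`. Conversely, an odd strictly monotone map between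
negation-closed sets preserves all four operations, because `a → b` only depends on `¬a`, `b` and
whether `a ≤ b`. Sending each `u ∈ U` to its rank in `U`, and `-u` to minus that rank, is such a
map from `U ∪ -U` onto `Z_{2|U|}`.
-/

open Set Pointwise Finset

lemma SImp_eq_neg_or_eq (a b : ℤ) : SImp a b = -a ∨ SImp a b = b := by
  unfold SImp
  split_ifs
  · exact max_choice _ _
  · exact min_choice _ _

lemma subalg_of_neg_mem {Z S : Set ℤ} (hne : S.Nonempty) (hsub : S ⊆ Z)
    (hneg : ∀ a ∈ S, -a ∈ S) : Subalg Z S := by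
  refine ⟨hne, hsub, fun a ha b hb => ⟨?_, ?_, hneg a ha, ?_⟩⟩
  · rcases min_choice a b with h | h <;> rw [h] <;> assumption
  · rcases max_choice a b with h | h <;> rw [h] <;> assumption
  · rcases SImp_eq_neg_or_eq a b with h | h <;> rw [h]
    exacts [hneg a ha, hb]

lemma Subalg.neg_mem {Z S : Set ℤ} (hS : Subalg Z S) {a : ℤ} (ha : a ∈ S) : -a ∈ S :=
  (hS.2.2 a ha a ha).2.2.1

lemma SHom_of_strictMonoOn {S T : Set ℤ} {h : ℤ → ℤ} (hST : MapsTo h S T)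
    (hneg : ∀ a ∈ S, -a ∈ S) (hmono : StrictMonoOn h S) (hodd : ∀ a ∈ S, h (-a) = -h a) :
    SHom S T h := by
  refine ⟨hST, fun a ha b hb => ⟨hmono.monotoneOn.map_min ha hb,
    hmono.monotoneOn.map_max ha hb, hodd a ha, ?_⟩⟩
  unfold SImp
  by_cases hab : a ≤ b
  · rw [if_pos hab, if_pos ((hmono.le_iff_le ha hb).2 hab),
      hmono.monotoneOn.map_max (hneg a ha) hb, hodd a ha]
  · rw [if_neg hab, if_neg (mt (hmono.le_iff_le ha hb).1 hab),
      hmono.monotoneOn.map_min (hneg a ha) hb, hodd a ha]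

lemma neg_mem_union_neg {U : Set ℤ} {a : ℤ} (ha : a ∈ U ∪ -U) : -a ∈ U ∪ -U := by
  rcases ha with ha | ha
  · exact Or.inr (by simpa using ha)
  · exact Or.inl ha

lemma eq_union_neg_of_neg_mem {S : Set ℤ} (h0 : (0 : ℤ) ∉ S) (hneg : ∀ a ∈ S, -a ∈ S) :
    S = {a ∈ S | 0 < a} ∪ -{a ∈ S | 0 < a} := by
  ext a
  simp only [Set.mem_union, Set.mem_ofPred_eq, Set.mem_neg]
  constructor
  · intro ha
    rcases lt_trichotomy a 0 with h | rfl | h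
    · exact Or.inr ⟨hneg a ha, by omega⟩
    · exact absurd ha h0
    · exact Or.inl ⟨ha, h⟩
  · rintro (⟨ha, _⟩ | ⟨ha, _⟩)
    · exact ha
    · simpa using hneg _ ha

lemma ncard_union_neg {U : Set ℤ} (hU : U.Finite) (hpos : ∀ a ∈ U, 0 < a) :
    (U ∪ -U).ncard = 2 * U.ncard := by
  have hdisj : Disjoint U (-U) := by
    rw [Set.disjoint_left]
    intro a ha ha'
    have := hpos a ha
    have := hpos (-a) ha'
    omega
  rw [Set.ncard_union_eq hdisj hU hU.neg, Set.ncard_neg]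
  ring

lemma Zeven_eq (n : ℕ) : Zeven n = Set.Icc 1 (n : ℤ) ∪ -Set.Icc 1 (n : ℤ) := by
  ext a
  simp only [Zeven, Set.mem_ofPred_eq, Set.mem_union, Set.mem_neg, Set.mem_Icc]
  omega

theorem subalg_Zeven_iff {n : ℕ} {S : Set ℤ} :
    Subalg (Zeven n) S ↔ ∃ U : Set ℤ, U.Nonempty ∧ U ⊆ Set.Icc 1 (n : ℤ) ∧ S = U ∪ -U := by
  constructor
  · intro hS
    have h0 : (0 : ℤ) ∉ S := fun h => (hS.2.1 h).2 rfl
    refine ⟨{a ∈ S | 0 < a}, ?_, ?_, eq_union_neg_of_neg_mem h0 fun a => hS.neg_mem⟩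
    · obtain ⟨a, ha⟩ := hS.1
      rcases (hS.2.1 ha).2.lt_or_gt with h | h
      · exact ⟨-a, hS.neg_mem ha, by omega⟩
      · exact ⟨a, ha, h⟩
    · rintro a ⟨ha, h0⟩
      exact ⟨h0, (hS.2.1 ha).1.2⟩
  · rintro ⟨U, hUne, hU, rfl⟩
    refine subalg_of_neg_mem (hUne.mono subset_union_left) ?_ fun a => neg_mem_union_neg
    rw [Zeven_eq]
    exact union_subset_union hU (Set.neg_subset_neg.2 hU)

def rankIn (F : Finset ℤ) (a : ℤ) : ℕ := #(F.filter (· ≤ a))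

lemma rankIn_pos {F : Finset ℤ} {a : ℤ} (ha : a ∈ F) : 0 < rankIn F a :=
  card_pos.2 ⟨a, by simp [ha]⟩

lemma rankIn_lt_rankIn {F : Finset ℤ} {a b : ℤ} (hb : b ∈ F) (hab : a < b) :
    rankIn F a < rankIn F b := by
  refine card_lt_card ((Finset.ssubset_iff_of_subset ?_).2 ⟨b, ?_, ?_⟩)
  · exact monotone_filter_right F fun _ _ => (le_trans · hab.le)
  · simp [hb]
  · simp [hab]

lemma image_rankIn (F : Finset ℤ) : F.image (rankIn F) = Finset.Icc 1 #F := by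
  have hinj : Set.InjOn (rankIn F) F :=
    StrictMonoOn.injOn fun _ _ _ hb hab => rankIn_lt_rankIn hb hab
  refine eq_of_subset_of_card_le (fun k hk => ?_) ?_
  · obtain ⟨a, ha, rfl⟩ := Finset.mem_image.1 hk
    exact Finset.mem_Icc.2 ⟨rankIn_pos ha, card_le_card (filter_subset _ F)⟩
  · rw [Nat.card_Icc, card_image_of_injOn hinj]
    omega

def signedRank (F : Finset ℤ) (a : ℤ) : ℤ := a.sign * rankIn F |a|

lemma signedRank_neg (F : Finset ℤ) (a : ℤ) : signedRank F (-a) = -signedRank F a := by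
  simp only [signedRank, Int.sign_neg, abs_neg, neg_mul]

lemma signedRank_of_pos (F : Finset ℤ) {a : ℤ} (ha : 0 < a) : signedRank F a = rankIn F a := by
  simp only [signedRank, Int.sign_eq_one_of_pos ha, abs_of_pos ha, one_mul]

lemma signedRank_of_neg (F : Finset ℤ) {a : ℤ} (ha : a < 0) :
    signedRank F a = -(rankIn F (-a) : ℤ) := by
  rw [← neg_neg a, signedRank_neg, signedRank_of_pos F (neg_pos.2 ha), neg_neg]

section

variable {F : Finset ℤ} (hF : ∀ a ∈ F, 0 < a)
include hF

lemma image_signedRank : signedRank F '' (↑F ∪ -↑F) = Zeven #F := by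
  have hpos : signedRank F '' F = Set.Icc 1 (#F : ℤ) := by
    rw [← Nat.cast_one (R := ℤ), ← Nat.image_cast_int_Icc, ← Finset.coe_Icc, ← image_rankIn,
      Finset.coe_image, Set.image_image]
    exact Set.image_congr fun a ha => signedRank_of_pos F (hF a ha)
  rw [Set.image_union, ← Set.image_neg_eq_neg, Set.image_image, Zeven_eq, ← hpos,
    ← Set.image_neg_eq_neg, Set.image_image]
  simp only [signedRank_neg]

lemma strictMonoOn_signedRank : StrictMonoOn (signedRank F) (↑F ∪ -↑F) := by
  rintro a ha b hb hab
  simp only [Set.mem_union, Finset.mem_coe, Set.mem_neg] at ha hb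
  rcases ha with ha | ha <;> rcases hb with hb | hb
  · rw [signedRank_of_pos F (hF a ha), signedRank_of_pos F (hF b hb)]
    exact_mod_cast rankIn_lt_rankIn hb hab
  · have := hF a ha
    have := hF (-b) hb
    omega
  · have := hF (-a) ha
    rw [signedRank_of_neg F (by omega), signedRank_of_pos F (hF b hb)]
    have := rankIn_pos hb
    omega
  · have := hF (-a) ha
    have := hF (-b) hb
    rw [signedRank_of_neg F (by omega), signedRank_of_neg F (by omega)]
    have := rankIn_lt_rankIn ha (neg_lt_neg hab)
    omega

end

theorem exists_bijOn_SHom_Zeven {U : Set ℤ} (hU : U.Finite) (hpos : ∀ a ∈ U, 0 < a) :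
    ∃ h : ℤ → ℤ, SHom (U ∪ -U) (Zeven U.ncard) h ∧ BijOn h (U ∪ -U) (Zeven U.ncard) := by
  obtain ⟨F, rfl⟩ := hU.exists_finset_coe
  have hmono := strictMonoOn_signedRank hpos
  have hbij := hmono.injOn.bijOn_image
  rw [image_signedRank hpos, ← Set.ncard_coe_finset] at hbij
  exact ⟨signedRank F, SHom_of_strictMonoOn hbij.mapsTo (fun _ => neg_mem_union_neg) hmono
    fun a _ => signedRank_neg F a, hbij⟩

lemma ncard_Icc_one (n : ℕ) : (Set.Icc 1 (n : ℤ)).ncard = n := by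
  rw [Set.ncard_eq_toFinset_card', Set.toFinset_Icc, Int.card_Icc]
  omega

lemma ncard_lt_of_union_neg_ne_Zeven {n : ℕ} {U : Set ℤ} (hU : U ⊆ Set.Icc 1 (n : ℤ))
    (hne : U ∪ -U ≠ Zeven n) : U.ncard < n := by
  have hssub : U ⊂ Set.Icc 1 (n : ℤ) :=
    hU.ssubset_of_ne fun h => hne (by rw [h, Zeven_eq])
  simpa only [ncard_Icc_one] using Set.ncard_lt_ncard hssub (Set.finite_Icc _ _)

theorem stmt0_general (n : ℕ) (S : Set ℤ) :
    (Subalg (Zeven n) S ↔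
      ∃ U : Set ℤ, U.Nonempty ∧ U ⊆ Set.Icc 1 (n : ℤ) ∧ S = U ∪ (fun x : ℤ => -x) '' U) ∧
    (Subalg (Zeven n) S →
      ∃ U : Set ℤ, U.Nonempty ∧ U ⊆ Set.Icc 1 (n : ℤ) ∧ S = U ∪ (fun x : ℤ => -x) '' U ∧
        S.ncard = 2 * U.ncard ∧
        ∃ h : ℤ → ℤ, SHom S (Zeven U.ncard) h ∧ Set.BijOn h S (Zeven U.ncard)) ∧
    (Subalg (Zeven n) S → S ≠ Zeven n →
      ∃ m : ℕ, m < n ∧ ∃ h : ℤ → ℤ, SHom S (Zeven m) h ∧ Set.BijOn h S (Zeven m)) := by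
  simp only [Set.image_neg_eq_neg]
  have hfin {U : Set ℤ} (hU : U ⊆ Set.Icc 1 (n : ℤ)) : U.Finite := (Set.finite_Icc _ _).subset hU
  have hpos {U : Set ℤ} (hU : U ⊆ Set.Icc 1 (n : ℤ)) : ∀ a ∈ U, 0 < a := fun a ha => (hU ha).1
  refine ⟨subalg_Zeven_iff, fun hS => ?_, fun hS hne => ?_⟩
  · obtain ⟨U, hUne, hU, rfl⟩ := subalg_Zeven_iff.1 hS
    exact ⟨U, hUne, hU, rfl, ncard_union_neg (hfin hU) (hpos hU),
      exists_bijOn_SHom_Zeven (hfin hU) (hpos hU)⟩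
  · obtain ⟨U, -, hU, rfl⟩ := subalg_Zeven_iff.1 hS
    exact ⟨U.ncard, ncard_lt_of_union_neg_ne_Zeven hU hne,
      exists_bijOn_SHom_Zeven (hfin hU) (hpos hU)⟩

theorem stmt0 (n : ℕ) (hn : 1 ≤ n) (S : Set ℤ) (hne : S.Nonempty) (hsub : S ⊆ Zeven n) :
    (Subalg (Zeven n) S ↔
      ∃ U : Set ℤ, U.Nonempty ∧ U ⊆ Set.Icc 1 (n : ℤ) ∧ S = U ∪ (fun x : ℤ => -x) '' U) ∧
    (Subalg (Zeven n) S →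
      ∃ U : Set ℤ, U.Nonempty ∧ U ⊆ Set.Icc 1 (n : ℤ) ∧ S = U ∪ (fun x : ℤ => -x) '' U ∧
        S.ncard = 2 * U.ncard ∧
        ∃ h : ℤ → ℤ, SHom S (Zeven U.ncard) h ∧ Set.BijOn h S (Zeven U.ncard)) ∧
    (Subalg (Zeven n) S → S ≠ Zeven n →
      ∃ m : ℕ, m < n ∧ ∃ h : ℤ → ℤ, SHom S (Zeven m) h ∧ Set.BijOn h S (Zeven m)) :=
  stmt0_general n S
end

section
/- Let m, n ≥ 1 and let h : Z_{2m} → Z_{2n} be a homomorphism (a map preserving ∧, ∨, ¬ and →). Then h is injective, and consequently m ≤ n. Moreover the only homomorphism from Z_{2n} to Z_{2n} is the identity map. -/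
theorem StrictMonoOn.add_sub_le_of_Icc {f : ℤ → ℤ} {a b : ℤ} (hf : StrictMonoOn f (Set.Icc a b))
    (hab : a ≤ b) : f a + (b - a) ≤ f b := by
  suffices ∀ k, a ≤ k → k ≤ b → f a + (k - a) ≤ f k from this b hab le_rfl
  intro k hak
  induction k, hak using Int.leInduction with
  | base => simp
  | succ k hak ih =>
    intro hkb
    have hstep : f k < f (k + 1) :=
      hf ⟨hak, by omega⟩ ⟨by omega, hkb⟩ (lt_add_one k)
    have := ih (by omega)
    omega

theorem neg_mem_Zeven {n : ℕ} {a : ℤ} (ha : a ∈ Zeven n) : -a ∈ Zeven n := by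
  simp only [Zeven, Set.mem_ofPred_eq] at *
  omega

theorem Icc_one_subset_Zeven (n : ℕ) : Set.Icc 1 (n : ℤ) ⊆ Zeven n :=
  fun _ ha ↦ ⟨⟨by linarith [ha.1], ha.2⟩, by linarith [ha.1]⟩

namespace SHom

variable {m n : ℕ} {h : ℤ → ℤ} (hh : SHom (Zeven m) (Zeven n) h)
include hh

theorem map_neg {a : ℤ} (ha : a ∈ Zeven m) : h (-a) = -h a :=
  (hh.2 a ha a ha).2.2.1

theorem monotoneOn : MonotoneOn h (Zeven m) := by
  intro a ha b hb hab
  have hmax := (hh.2 a ha b hb).2.1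
  rw [max_eq_right hab] at hmax
  exact hmax ▸ le_max_left _ _

theorem strictMonoOn : StrictMonoOn h (Zeven m) := by
  intro a ha b hb hab
  refine lt_of_le_of_ne (hh.monotoneOn ha hb hab.le) fun hc ↦ (hh.1 ha).2 ?_
  have hsrc : SImp b a = min (-b) a := if_neg (not_le.mpr hab)
  have htgt : SImp (h b) (h a) = max (-h a) (h a) := by rw [← hc]; exact if_pos le_rfl
  have hmin := (hh.2 (-b) (neg_mem_Zeven hb) a ha).1
  rw [← hsrc, (hh.2 b hb a ha).2.2.2, htgt, hh.map_neg hb, ← hc] at hmin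
  omega

theorem apply_pos {a : ℤ} (ha : a ∈ Zeven m) (ha0 : 0 < a) : 0 < h a := by
  have := hh.strictMonoOn (neg_mem_Zeven ha) ha (by omega)
  rw [hh.map_neg ha] at this
  omega

theorem le_apply {a : ℤ} (ha0 : 0 < a) (ham : a ≤ m) : a ≤ h a := by
  have hmono := hh.strictMonoOn.mono ((Set.Icc_subset_Icc_right ham).trans (Icc_one_subset_Zeven m))
  have h1 := hh.apply_pos (Icc_one_subset_Zeven m ⟨le_rfl, by omega⟩) one_pos
  have := hmono.add_sub_le_of_Icc (by omega : (1 : ℤ) ≤ a)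
  omega

theorem apply_add_sub_le {a : ℤ} (ha0 : 0 < a) (ham : a ≤ m) : h a + (m - a) ≤ n := by
  have hmono := hh.strictMonoOn.mono
    ((Set.Icc_subset_Icc_left (by omega : (1 : ℤ) ≤ a)).trans (Icc_one_subset_Zeven m))
  have hm := (hh.1 (Icc_one_subset_Zeven m ⟨by omega, le_rfl⟩)).1.2
  have := hmono.add_sub_le_of_Icc ham
  omega

theorem index_le : m ≤ n := by
  rcases Nat.eq_zero_or_pos m with rfl | hm
  · exact Nat.zero_le n
  · have := hh.le_apply one_pos (by omega)
    have := hh.apply_add_sub_le one_pos (by omega)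
    omega

end SHom

theorem SHom.eqOn_id {n : ℕ} {e : ℤ → ℤ} (he : SHom (Zeven n) (Zeven n) e) :
    Set.EqOn e id (Zeven n) := by
  have eq_of_pos : ∀ a : ℤ, 0 < a → a ≤ n → e a = a := fun a ha0 han ↦ by
    have := he.le_apply ha0 han
    have := he.apply_add_sub_le ha0 han
    omega
  intro a ha
  rcases lt_or_gt_of_ne ha.2 with ha_neg | ha_pos
  · have := he.map_neg (neg_mem_Zeven ha)
    rw [neg_neg, eq_of_pos (-a) (by omega) (by linarith [ha.1.1])] at this
    simpa using this
  · exact eq_of_pos a ha_pos ha.1.2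

theorem stmt2_general (m n : ℕ) (h : ℤ → ℤ)
    (hh : SHom (Zeven m) (Zeven n) h) :
    Set.InjOn h (Zeven m) ∧ m ≤ n ∧
      ∀ e : ℤ → ℤ, SHom (Zeven n) (Zeven n) e → Set.EqOn e id (Zeven n) :=
  ⟨hh.strictMonoOn.injOn, hh.index_le, fun _ he ↦ he.eqOn_id⟩

theorem stmt2 (m n : ℕ) (hm : 1 ≤ m) (hn : 1 ≤ n) (h : ℤ → ℤ)
    (hh : SHom (Zeven m) (Zeven n) h) :
    Set.InjOn h (Zeven m) ∧ m ≤ n ∧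
      ∀ e : ℤ → ℤ, SHom (Zeven n) (Zeven n) e → Set.EqOn e id (Zeven n) :=
  stmt2_general m n h hh
end

section
/- Let n ≥ 1 and let k ∈ {2n, 2n+1}. An equivalence relation θ on Z_k is compatible with the Sugihara operations (meaning: a θ b and c θ d imply (a ∧ c) θ (b ∧ d), (a ∨ c) θ (b ∨ d), (¬a) θ (¬b) and (a → c) θ (b → d)) if and only if θ = ≈_m for some m with 0 ≤ m ≤ n. In particular the compatible equivalence relations on Z_k form the chain ≈_0 ⊆ ≈_1 ⊆ … ⊆ ≈_n, where ≈_0 is the diagonal relation and ≈_n = Z_k × Z_k. -/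
/-- The relation `≈_m`. -/
def eqm (m : ℕ) (a b : ℤ) : Prop := a = b ∨ (|a| ≤ (m : ℤ) ∧ |b| ≤ (m : ℤ))

/-- `r` is an equivalence relation on `Z` compatible with the Sugihara operations. -/
def Compatible (Z : Set ℤ) (r : ℤ → ℤ → Prop) : Prop :=
  (∀ a ∈ Z, r a a) ∧ (∀ a ∈ Z, ∀ b ∈ Z, r a b → r b a) ∧
    (∀ a ∈ Z, ∀ b ∈ Z, ∀ c ∈ Z, r a b → r b c → r a c) ∧
    ∀ a ∈ Z, ∀ b ∈ Z, ∀ c ∈ Z, ∀ d ∈ Z, r a b → r c d →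
      r (min a c) (min b d) ∧ r (max a c) (max b d) ∧ r (-a) (-b) ∧ r (SImp a c) (SImp b d)

/-!
`≈_m` is the kernel of the truncation `a ↦ if |a| ≤ m then 0 else a`, which is monotone, odd and
commutes with `→`; hence it is compatible. Conversely, if a compatible `θ` identifies `a ≠ b`, then
with `M = max |a| |b|` it identifies `-M` with `M` (through `|a| θ |b|` and, when `|a| < |b|`, the
implications `|a| → |b| = |b|` and `|b| → |a| = -|b|`), and `-j θ j` forces `-j θ c` for all
`|c| ≤ j` (take `min` with `c`). So `θ = ≈_m` for the largest `m ≤ n` with `-m θ m`.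
-/

section Universe

variable {n : ℕ} {Z : Set ℤ}

lemma min_mem_of_mem {a b : ℤ} (ha : a ∈ Z) (hb : b ∈ Z) : min a b ∈ Z := by
  rcases min_choice a b with h | h <;> rwa [h]

lemma max_mem_of_mem {a b : ℤ} (ha : a ∈ Z) (hb : b ∈ Z) : max a b ∈ Z := by
  rcases max_choice a b with h | h <;> rwa [h]

lemma SImp_mem {a b : ℤ} (ha : -a ∈ Z) (hb : b ∈ Z) : SImp a b ∈ Z := by
  unfold SImp
  split_ifs
  exacts [max_mem_of_mem ha hb, min_mem_of_mem ha hb]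

lemma neg_mem_of_eq_Zeven_or_Zodd (hZ : Z = Zeven n ∨ Z = Zodd n) {a : ℤ} (ha : a ∈ Z) :
    -a ∈ Z := by
  rcases hZ with rfl | rfl <;> simp only [Zeven, Zodd, Set.mem_ofPred_eq] at ha ⊢ <;> omega

lemma abs_le_of_mem_of_eq_Zeven_or_Zodd (hZ : Z = Zeven n ∨ Z = Zodd n) {a : ℤ} (ha : a ∈ Z) :
    |a| ≤ n := by
  rcases hZ with rfl | rfl
  exacts [abs_le.2 ha.1, abs_le.2 ha]

lemma natCast_mem_of_eq_Zeven_or_Zodd (hZ : Z = Zeven n ∨ Z = Zodd n) {j : ℕ} (h0 : j ≠ 0)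
    (hj : j ≤ n) : (j : ℤ) ∈ Z := by
  rcases hZ with rfl | rfl <;> simp only [Zeven, Zodd, Set.mem_ofPred_eq] <;> omega

end Universe

section Eqm

lemma eqm_mono {m m' : ℕ} (h : m ≤ m') {a b : ℤ} : eqm m a b → eqm m' a b := by
  rintro (rfl | ⟨ha, hb⟩)
  · exact Or.inl rfl
  · exact Or.inr ⟨ha.trans (by exact_mod_cast h), hb.trans (by exact_mod_cast h)⟩

lemma eqm_zero (a b : ℤ) : eqm 0 a b ↔ a = b := by
  refine ⟨?_, fun h => Or.inl h⟩
  rintro (h | ⟨ha, hb⟩)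
  · exact h
  · rw [Nat.cast_zero, abs_nonpos_iff] at ha hb
    rw [ha, hb]

def trunc (m : ℕ) (a : ℤ) : ℤ := if |a| ≤ m then 0 else a

variable (m : ℕ)

lemma trunc_eq_zero_iff {a : ℤ} : trunc m a = 0 ↔ |a| ≤ m := by
  unfold trunc
  split_ifs with h
  · simpa using h
  · exact iff_of_false (by rintro rfl; simp at h) h

lemma eqm_iff_trunc_eq (a b : ℤ) : eqm m a b ↔ trunc m a = trunc m b := by
  unfold eqm trunc
  rcases abs_cases a with ⟨_, _⟩ | ⟨_, _⟩ <;> rcases abs_cases b with ⟨_, _⟩ | ⟨_, _⟩ <;>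
    split_ifs <;> omega

lemma trunc_mono : Monotone (trunc m) := by
  intro a b hab
  unfold trunc
  rcases abs_cases a with ⟨_, _⟩ | ⟨_, _⟩ <;> rcases abs_cases b with ⟨_, _⟩ | ⟨_, _⟩ <;>
    split_ifs <;> omega

lemma trunc_neg (a : ℤ) : trunc m (-a) = -trunc m a := by
  unfold trunc
  rw [abs_neg]
  split_ifs <;> simp

lemma trunc_SImp (a b : ℤ) : trunc m (SImp a b) = SImp (trunc m a) (trunc m b) := by
  unfold SImp
  rcases le_or_gt a b with hab | hab
  · rw [if_pos hab, if_pos (trunc_mono m hab), (trunc_mono m).map_max, trunc_neg]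
  rcases (trunc_mono m hab.le).lt_or_eq with hlt | heq
  · rw [if_neg hab.not_ge, if_neg hlt.not_ge, (trunc_mono m).map_min, trunc_neg]
  -- `a ≈_m b` with `a ≠ b`: both sides of `a → b` collapse to `0`
  obtain ⟨hb, ha⟩ : |b| ≤ m ∧ |a| ≤ m :=
    ((eqm_iff_trunc_eq m b a).2 heq).resolve_left hab.ne
  rw [if_neg hab.not_ge, (trunc_eq_zero_iff m).2 ha, (trunc_eq_zero_iff m).2 hb, if_pos le_rfl,
    neg_zero, max_self, trunc_eq_zero_iff]
  rcases min_choice (-a) b with h | h <;> rw [h]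
  exacts [(abs_neg a).le.trans ha, hb]

end Eqm

section Compatible

variable {Z : Set ℤ} {r : ℤ → ℤ → Prop}

theorem compatible_of_forall_iff_map_eq (hneg : ∀ a ∈ Z, -a ∈ Z) {f : ℤ → ℤ}
    (hf : Monotone f) (hf_neg : ∀ a, f (-a) = -f a)
    (hf_SImp : ∀ a b, f (SImp a b) = SImp (f a) (f b))
    (hr : ∀ a ∈ Z, ∀ b ∈ Z, r a b ↔ f a = f b) : Compatible Z r := by
  refine ⟨fun a ha => (hr a ha a ha).2 rfl,
    fun a ha b hb h => (hr b hb a ha).2 ((hr a ha b hb).1 h).symm,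
    fun a ha b hb c hc h₁ h₂ =>
      (hr a ha c hc).2 (((hr a ha b hb).1 h₁).trans ((hr b hb c hc).1 h₂)),
    fun a ha b hb c hc d hd h₁ h₂ => ?_⟩
  have e₁ := (hr a ha b hb).1 h₁
  have e₂ := (hr c hc d hd).1 h₂
  refine ⟨(hr _ (min_mem_of_mem ha hc) _ (min_mem_of_mem hb hd)).2 ?_,
    (hr _ (max_mem_of_mem ha hc) _ (max_mem_of_mem hb hd)).2 ?_,
    (hr _ (hneg a ha) _ (hneg b hb)).2 ?_,
    (hr _ (SImp_mem (hneg a ha) hc) _ (SImp_mem (hneg b hb) hd)).2 ?_⟩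
  · rw [hf.map_min, hf.map_min, e₁, e₂]
  · rw [hf.map_max, hf.map_max, e₁, e₂]
  · rw [hf_neg, hf_neg, e₁]
  · rw [hf_SImp, hf_SImp, e₁, e₂]

namespace Compatible

variable (hc : Compatible Z r) (hneg : ∀ a ∈ Z, -a ∈ Z)
include hc hneg

lemma rel_abs {a b : ℤ} (ha : a ∈ Z) (hb : b ∈ Z) (h : r a b) : r |a| |b| := by
  obtain ⟨-, -, -, hop⟩ := hc
  have h_neg := (hop a ha b hb a ha b hb h h).2.2.1
  simpa only [abs_eq_max_neg] using (hop a ha b hb _ (hneg a ha) _ (hneg b hb) h h_neg).2.1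

lemma rel_neg_self_of_rel_of_lt {u v : ℤ} (hu : u ∈ Z) (hv : v ∈ Z) (hu₀ : 0 ≤ u)
    (huv : u < v) (h : r u v) : r (-v) v := by
  obtain ⟨-, hsymm, -, hop⟩ := hc
  have h_imp := (hop u hu v hv v hv u hu h (hsymm u hu v hv h)).2.2.2
  have e₁ : SImp u v = v := by
    rw [SImp, if_pos huv.le, max_eq_right (by omega)]
  have e₂ : SImp v u = -v := by
    rw [SImp, if_neg huv.not_ge, min_eq_left (by omega)]
  rw [e₁, e₂] at h_imp
  exact hsymm v hv _ (hneg v hv) h_imp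

lemma rel_neg_max_abs {a b : ℤ} (ha : a ∈ Z) (hb : b ∈ Z) (h : r a b) (hab : a ≠ b) :
    r (-max |a| |b|) (max |a| |b|) := by
  have hsymm := hc.2.1
  have ha' : |a| ∈ Z := abs_eq_max_neg (a := a) ▸ max_mem_of_mem ha (hneg a ha)
  have hb' : |b| ∈ Z := abs_eq_max_neg (a := b) ▸ max_mem_of_mem hb (hneg b hb)
  have h_abs := hc.rel_abs hneg ha hb h
  rcases lt_trichotomy |a| |b| with hlt | heq | hgt
  · rw [max_eq_right hlt.le]
    exact hc.rel_neg_self_of_rel_of_lt hneg ha' hb' (abs_nonneg a) hlt h_abs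
  · have hba : b = -a := by
      rcases abs_cases a with ⟨_, _⟩ | ⟨_, _⟩ <;> rcases abs_cases b with ⟨_, _⟩ | ⟨_, _⟩ <;>
        omega
    rw [← heq, max_self]
    rcases abs_cases a with ⟨ha_abs, -⟩ | ⟨ha_abs, -⟩ <;> rw [ha_abs]
    · rw [hba] at h
      exact hsymm a ha _ (hneg a ha) h
    · rw [neg_neg, ← hba]
      exact h
  · rw [max_eq_left hgt.le]
    exact hc.rel_neg_self_of_rel_of_lt hneg hb' ha' (abs_nonneg b) hgt (hsymm _ ha' _ hb' h_abs)

lemma rel_of_abs_le {j c : ℤ} (hj : j ∈ Z) (hc' : c ∈ Z) (h : r (-j) j) (hcj : |c| ≤ j) :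
    r (-j) c := by
  obtain ⟨hrefl, -, -, hop⟩ := hc
  have h_min := (hop _ (hneg j hj) _ hj c hc' c hc' h (hrefl c hc')).1
  rwa [min_eq_left (neg_le_of_abs_le hcj), min_eq_right (le_of_abs_le hcj)] at h_min

end Compatible

open Classical in
theorem Compatible.exists_forall_iff_eqm {n : ℕ} (hZ : Z = Zeven n ∨ Z = Zodd n)
    (hc : Compatible Z r) : ∃ m ≤ n, ∀ a ∈ Z, ∀ b ∈ Z, (r a b ↔ eqm m a b) := by
  have hneg : ∀ a ∈ Z, -a ∈ Z := fun a => neg_mem_of_eq_Zeven_or_Zodd hZ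
  obtain ⟨hrefl, hsymm, htrans, -⟩ := id hc
  set m := Nat.findGreatest (fun j : ℕ => r (-j) j) n with hm
  refine ⟨m, Nat.findGreatest_le n, fun a ha b hb => ⟨fun h => ?_, fun h => ?_⟩⟩
  · rcases eq_or_ne a b with rfl | hab
    · exact Or.inl rfl
    have ha_le := abs_le_of_mem_of_eq_Zeven_or_Zodd hZ ha
    have hb_le := abs_le_of_mem_of_eq_Zeven_or_Zodd hZ hb
    set j : ℕ := max a.natAbs b.natAbs with hj
    have hj_cast : (j : ℤ) = max |a| |b| := by simp [hj]
    have hjm : j ≤ m := by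
      refine Nat.le_findGreatest (by omega) ?_
      rw [hj_cast]
      exact hc.rel_neg_max_abs hneg ha hb h hab
    exact Or.inr ⟨by omega, by omega⟩
  · rcases eq_or_ne m 0 with h0 | h0
    · rw [h0, eqm_zero] at h
      exact h ▸ hrefl a ha
    rcases h with rfl | ⟨ha_le, hb_le⟩
    · exact hrefl a ha
    have hmZ := natCast_mem_of_eq_Zeven_or_Zodd hZ h0 (Nat.findGreatest_le n)
    have h_m : r (-m) m := Nat.findGreatest_of_ne_zero hm.symm h0
    have h_a := hc.rel_of_abs_le hneg hmZ ha h_m ha_le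
    have h_b := hc.rel_of_abs_le hneg hmZ hb h_m hb_le
    exact htrans a ha _ (hneg _ hmZ) b hb (hsymm _ (hneg _ hmZ) a ha h_a) h_b

end Compatible

theorem stmt4_general (n : ℕ) (Z : Set ℤ) (hZ : Z = Zeven n ∨ Z = Zodd n)
    (r : ℤ → ℤ → Prop) :
    (Compatible Z r ↔ ∃ m : ℕ, m ≤ n ∧ ∀ a ∈ Z, ∀ b ∈ Z, (r a b ↔ eqm m a b)) ∧
    (∀ m m' : ℕ, m ≤ m' → ∀ a b : ℤ, eqm m a b → eqm m' a b) ∧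
    (∀ a b : ℤ, eqm 0 a b ↔ a = b) ∧
    (∀ a ∈ Z, ∀ b ∈ Z, eqm n a b) := by
  refine ⟨⟨Compatible.exists_forall_iff_eqm hZ, ?_⟩, fun m m' h a b => eqm_mono h, eqm_zero,
    fun a ha b hb => Or.inr ⟨abs_le_of_mem_of_eq_Zeven_or_Zodd hZ ha,
      abs_le_of_mem_of_eq_Zeven_or_Zodd hZ hb⟩⟩
  rintro ⟨m, -, hm⟩
  exact compatible_of_forall_iff_map_eq (fun a => neg_mem_of_eq_Zeven_or_Zodd hZ) (trunc_mono m)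
    (trunc_neg m) (trunc_SImp m) fun a ha b hb => (hm a ha b hb).trans (eqm_iff_trunc_eq m a b)

theorem stmt4 (n : ℕ) (hn : 1 ≤ n) (Z : Set ℤ) (hZ : Z = Zeven n ∨ Z = Zodd n)
    (r : ℤ → ℤ → Prop) :
    (Compatible Z r ↔ ∃ m : ℕ, m ≤ n ∧ ∀ a ∈ Z, ∀ b ∈ Z, (r a b ↔ eqm m a b)) ∧
    (∀ m m' : ℕ, m ≤ m' → ∀ a b : ℤ, eqm m a b → eqm m' a b) ∧
    (∀ a b : ℤ, eqm 0 a b ↔ a = b) ∧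
    (∀ a ∈ Z, ∀ b ∈ Z, eqm n a b) :=
  stmt4_general n Z hZ r
end

section
/- Let 1 ≤ m ≤ n and let 0 < b₁ < b₂ < … < b_m ≤ n and 0 < c₁ < c₂ < … < c_m ≤ n be integers. (i) The sets A = {±b₁,…,±b_m} and B = {±c₁,…,±c_m} are subalgebras of Z_{2n}, and there is a bijective homomorphism e : A → B with e(b_i) = c_i for 1 ≤ i ≤ m. (ii) The sets A ∪ {0} and B ∪ {0} are subalgebras of Z_{2n+1}, and there is a bijective homomorphism e : A ∪ {0} → B ∪ {0} with e(b_i) = c_i for 1 ≤ i ≤ m and e(0) = 0. -/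
section General

variable {S T : Set ℤ} {e : ℤ → ℤ}

theorem Subalg.of_neg_mem {Z : Set ℤ} (hne : S.Nonempty) (hSZ : S ⊆ Z)
    (hneg : ∀ x ∈ S, -x ∈ S) : Subalg Z S := by
  have hmin : ∀ a ∈ S, ∀ b ∈ S, min a b ∈ S := fun a ha b hb =>
    (min_choice a b).elim (fun h => h.symm ▸ ha) (fun h => h.symm ▸ hb)
  have hmax : ∀ a ∈ S, ∀ b ∈ S, max a b ∈ S := fun a ha b hb =>
    (max_choice a b).elim (fun h => h.symm ▸ ha) (fun h => h.symm ▸ hb)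
  refine ⟨hne, hSZ, fun a ha b hb => ⟨hmin a ha b hb, hmax a ha b hb, hneg a ha, ?_⟩⟩
  unfold SImp
  split_ifs
  · exact hmax _ (hneg a ha) _ hb
  · exact hmin _ (hneg a ha) _ hb

theorem SHom.of_strictMonoOn (hmaps : Set.MapsTo e S T) (hneg : ∀ x ∈ S, -x ∈ S)
    (hodd : ∀ x, e (-x) = -e x) (hmono : StrictMonoOn e S) : SHom S T e := by
  refine ⟨hmaps, fun a ha b hb =>
    ⟨hmono.monotoneOn.map_min ha hb, hmono.monotoneOn.map_max ha hb, hodd a, ?_⟩⟩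
  unfold SImp
  by_cases hab : a ≤ b
  · rw [if_pos hab, if_pos ((hmono.le_iff_le ha hb).2 hab), ← hodd]
    exact hmono.monotoneOn.map_max (hneg a ha) hb
  · rw [if_neg hab, if_neg (mt (hmono.le_iff_le ha hb).1 hab), ← hodd]
    exact hmono.monotoneOn.map_min (hneg a ha) hb

theorem strictMonoOn_of_odd (hneg : ∀ x ∈ S, -x ∈ S) (hodd : ∀ x, e (-x) = -e x)
    (hpos : ∀ x ∈ S, 0 < x → 0 < e x) (hmono : StrictMonoOn e {x ∈ S | 0 < x}) :
    StrictMonoOn e S := by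
  have hzero : e 0 = 0 := by have := hodd 0; rw [neg_zero] at this; omega
  have hnonneg : ∀ x ∈ S, 0 ≤ x → 0 ≤ e x := fun x hx h0 =>
    h0.eq_or_lt.elim (fun h => by rw [← h, hzero]) (fun h => (hpos x hx h).le)
  intro x hx y hy hxy
  rcases lt_or_ge 0 x with hx0 | hx0
  · exact hmono ⟨hx, hx0⟩ ⟨hy, hx0.trans hxy⟩ hxy
  rcases lt_or_ge y 0 with hy0 | hy0
  · have := hmono ⟨hneg y hy, neg_pos.2 hy0⟩ ⟨hneg x hx, by omega⟩ (neg_lt_neg hxy)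
    rw [hodd, hodd] at this
    exact neg_lt_neg_iff.1 this
  rcases hx0.lt_or_eq with hx0 | rfl
  · have := hpos (-x) (hneg x hx) (neg_pos.2 hx0)
    rw [hodd] at this
    exact (neg_pos.1 this).trans_le (hnonneg y hy hy0)
  · rw [hzero]
    exact hpos y hy hxy

def oddExtend (f : ℤ → ℤ) (x : ℤ) : ℤ := x.sign * f |x|

theorem oddExtend_neg (f : ℤ → ℤ) (x : ℤ) : oddExtend f (-x) = -oddExtend f x := by
  simp only [oddExtend, Int.sign_neg, abs_neg, neg_mul]

theorem oddExtend_of_pos (f : ℤ → ℤ) {x : ℤ} (hx : 0 < x) : oddExtend f x = f x := by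
  rw [oddExtend, Int.sign_eq_one_of_pos hx, abs_of_pos hx, one_mul]

theorem oddExtend_zero (f : ℤ → ℤ) : oddExtend f 0 = 0 := by
  simp only [oddExtend, Int.sign_zero, zero_mul]

end General

section SymmRange

variable {ι : Type*} {b c : ι → ℤ} {e : ℤ → ℤ}

def symmRange (b : ι → ℤ) : Set ℤ := {x | ∃ i, x = b i ∨ x = -b i}

theorem neg_mem_symmRange {x : ℤ} (hx : x ∈ symmRange b) : -x ∈ symmRange b := by
  obtain ⟨i, rfl | rfl⟩ := hx
  exacts [⟨i, Or.inr rfl⟩, ⟨i, Or.inl (neg_neg _)⟩]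

theorem neg_mem_symmRange_union_zero {x : ℤ} (hx : x ∈ symmRange b ∪ {0}) :
    -x ∈ symmRange b ∪ {0} := by
  rcases hx with hx | rfl
  exacts [Or.inl (neg_mem_symmRange hx), Or.inr neg_zero]

theorem symmRange_nonempty [Nonempty ι] : (symmRange b).Nonempty :=
  let i := Classical.arbitrary ι
  ⟨b i, i, Or.inl rfl⟩

theorem symmRange_subset_Zeven {n : ℕ} (hb0 : ∀ i, 0 < b i) (hbn : ∀ i, b i ≤ n) :
    symmRange b ⊆ Zeven n := by
  rintro x ⟨i, rfl | rfl⟩ <;>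
  · have := hb0 i; have := hbn i
    exact ⟨⟨by omega, by omega⟩, by omega⟩

theorem symmRange_union_zero_subset_Zodd {n : ℕ} (hb0 : ∀ i, 0 < b i) (hbn : ∀ i, b i ≤ n) :
    symmRange b ∪ {0} ⊆ Zodd n := by
  rintro x (hx | rfl)
  · exact (symmRange_subset_Zeven hb0 hbn hx).1
  · exact ⟨by omega, by omega⟩

theorem subalg_symmRange [Nonempty ι] {n : ℕ} (hb0 : ∀ i, 0 < b i) (hbn : ∀ i, b i ≤ n) :
    Subalg (Zeven n) (symmRange b) :=
  .of_neg_mem symmRange_nonempty (symmRange_subset_Zeven hb0 hbn) fun _ => neg_mem_symmRange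

theorem subalg_symmRange_union_zero [Nonempty ι] {n : ℕ} (hb0 : ∀ i, 0 < b i)
    (hbn : ∀ i, b i ≤ n) : Subalg (Zodd n) (symmRange b ∪ {0}) :=
  .of_neg_mem (symmRange_nonempty.mono Set.subset_union_left)
    (symmRange_union_zero_subset_Zodd hb0 hbn) fun _ => neg_mem_symmRange_union_zero

theorem mem_range_of_mem_symmRange_of_pos (hb0 : ∀ i, 0 < b i) {x : ℤ}
    (hx : x ∈ symmRange b ∪ {0}) (hx0 : 0 < x) : x ∈ Set.range b := by
  rcases hx with ⟨i, rfl | rfl⟩ | rfl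
  · exact ⟨i, rfl⟩
  · exact absurd hx0 (by have := hb0 i; omega)
  · exact absurd hx0 (lt_irrefl 0)

theorem image_symmRange (hodd : ∀ x, e (-x) = -e x) (he : ∀ i, e (b i) = c i) :
    e '' symmRange b = symmRange c := by
  ext y
  constructor
  · rintro ⟨x, ⟨i, rfl | rfl⟩, rfl⟩
    exacts [⟨i, Or.inl (he i)⟩, ⟨i, Or.inr (by rw [hodd, he])⟩]
  · rintro ⟨i, rfl | rfl⟩
    exacts [⟨b i, ⟨i, Or.inl rfl⟩, he i⟩, ⟨-b i, ⟨i, Or.inr rfl⟩, by rw [hodd, he]⟩]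

end SymmRange

section Iso

variable {ι : Type*} [LinearOrder ι] {b c : ι → ℤ}

theorem oddExtend_extend_apply (hb : StrictMono b) (hb0 : ∀ i, 0 < b i) (i : ι) :
    oddExtend (Function.extend b c 0) (b i) = c i := by
  rw [oddExtend_of_pos _ (hb0 i), hb.injective.extend_apply]

theorem strictMonoOn_oddExtend_extend (hb : StrictMono b) (hc : StrictMono c)
    (hb0 : ∀ i, 0 < b i) (hc0 : ∀ i, 0 < c i) :
    StrictMonoOn (oddExtend (Function.extend b c 0)) (symmRange b ∪ {0}) := by
  have hval := oddExtend_extend_apply (c := c) hb hb0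
  refine strictMonoOn_of_odd (fun _ => neg_mem_symmRange_union_zero) (oddExtend_neg _)
    (fun x hx hx0 => ?_) (fun x hx y hy hxy => ?_)
  · obtain ⟨i, rfl⟩ := mem_range_of_mem_symmRange_of_pos hb0 hx hx0
    exact hval i ▸ hc0 i
  · obtain ⟨i, rfl⟩ := mem_range_of_mem_symmRange_of_pos hb0 hx.1 hx.2
    obtain ⟨j, rfl⟩ := mem_range_of_mem_symmRange_of_pos hb0 hy.1 hy.2
    rw [hval, hval]
    exact hc (hb.lt_iff_lt.1 hxy)

end Iso

theorem stmt5_general (m n : ℕ) (hm : 1 ≤ m) (b c : Fin m → ℤ)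
    (hbmono : StrictMono b) (hcmono : StrictMono c)
    (hb0 : ∀ i, 0 < b i) (hbn : ∀ i, b i ≤ (n : ℤ))
    (hc0 : ∀ i, 0 < c i) (hcn : ∀ i, c i ≤ (n : ℤ))
    (A B : Set ℤ)
    (hA : A = {x : ℤ | ∃ i, x = b i ∨ x = -b i})
    (hB : B = {x : ℤ | ∃ i, x = c i ∨ x = -c i}) :
    (Subalg (Zeven n) A ∧ Subalg (Zeven n) B ∧
      ∃ e : ℤ → ℤ, SHom A B e ∧ Set.BijOn e A B ∧ ∀ i, e (b i) = c i) ∧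
    (Subalg (Zodd n) (A ∪ {0}) ∧ Subalg (Zodd n) (B ∪ {0}) ∧
      ∃ e : ℤ → ℤ, SHom (A ∪ {0}) (B ∪ {0}) e ∧ Set.BijOn e (A ∪ {0}) (B ∪ {0}) ∧
        (∀ i, e (b i) = c i) ∧ e 0 = 0) := by
  change A = symmRange b at hA
  change B = symmRange c at hB
  subst hA hB
  have : Nonempty (Fin m) := ⟨⟨0, hm⟩⟩
  set e := oddExtend (Function.extend b c 0)
  have hodd : ∀ x, e (-x) = -e x := oddExtend_neg _
  have hval : ∀ i, e (b i) = c i := oddExtend_extend_apply hbmono hb0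
  have hzero : e 0 = 0 := oddExtend_zero _
  have hmono0 : StrictMonoOn e (symmRange b ∪ {0}) :=
    strictMonoOn_oddExtend_extend hbmono hcmono hb0 hc0
  have hmono : StrictMonoOn e (symmRange b) := hmono0.mono Set.subset_union_left
  have hbij : Set.BijOn e (symmRange b) (symmRange c) :=
    image_symmRange hodd hval ▸ hmono.injOn.bijOn_image
  have hbij0 : Set.BijOn e (symmRange b ∪ {0}) (symmRange c ∪ {0}) := by
    convert hmono0.injOn.bijOn_image
    rw [Set.image_union, image_symmRange hodd hval, Set.image_singleton, hzero]
  exact ⟨⟨subalg_symmRange hb0 hbn, subalg_symmRange hc0 hcn,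
      e, .of_strictMonoOn hbij.mapsTo (fun _ => neg_mem_symmRange) hodd hmono, hbij, hval⟩,
    ⟨subalg_symmRange_union_zero hb0 hbn, subalg_symmRange_union_zero hc0 hcn,
      e, .of_strictMonoOn hbij0.mapsTo (fun _ => neg_mem_symmRange_union_zero) hodd hmono0,
      hbij0, hval, hzero⟩⟩

theorem stmt5 (m n : ℕ) (hm : 1 ≤ m) (hmn : m ≤ n) (b c : Fin m → ℤ)
    (hbmono : StrictMono b) (hcmono : StrictMono c)
    (hb0 : ∀ i, 0 < b i) (hbn : ∀ i, b i ≤ (n : ℤ))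
    (hc0 : ∀ i, 0 < c i) (hcn : ∀ i, c i ≤ (n : ℤ))
    (A B : Set ℤ)
    (hA : A = {x : ℤ | ∃ i, x = b i ∨ x = -b i})
    (hB : B = {x : ℤ | ∃ i, x = c i ∨ x = -c i}) :
    (Subalg (Zeven n) A ∧ Subalg (Zeven n) B ∧
      ∃ e : ℤ → ℤ, SHom A B e ∧ Set.BijOn e A B ∧ ∀ i, e (b i) = c i) ∧
    (Subalg (Zodd n) (A ∪ {0}) ∧ Subalg (Zodd n) (B ∪ {0}) ∧
      ∃ e : ℤ → ℤ, SHom (A ∪ {0}) (B ∪ {0}) e ∧ Set.BijOn e (A ∪ {0}) (B ∪ {0}) ∧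
        (∀ i, e (b i) = c i) ∧ e 0 = 0) :=
  stmt5_general m n hm b c hbmono hcmono hb0 hbn hc0 hcn A B hA hB
end

section
/- Let n ≥ 2. Every partial endomorphism of Z_{2n} other than the identity map of Z_{2n} equals, as a partial function on Z_{2n} (same domain and same values), a finite composition of the maps f_2, …, f_n, g. -/
/-- `h` with domain `D` is a partial endomorphism of (the algebra on) `Z`. -/
def PartialEnd (Z D : Set ℤ) (h : ℤ → ℤ) : Prop :=
  Subalg Z D ∧ Subalg Z (h '' D) ∧ SHom D (h '' D) h

/-- The partial endomorphism `f_i` of `Z_{2n}` (for `2 ≤ i ≤ n`), as a partial function. -/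
def fE (n i : ℕ) : ℤ →. ℤ :=
  PFun.res
    (fun a => if a = (i : ℤ) - 1 then (i : ℤ) else if a = -((i : ℤ) - 1) then -(i : ℤ) else a)
    (Zeven n \ {(i : ℤ), -(i : ℤ)})

/-- The partial endomorphism `g` of `Z_{2n}`, as a partial function. -/
def gE (n : ℕ) : ℤ →. ℤ :=
  PFun.res (fun a => if 0 < a then a - 1 else a + 1) (Zeven n \ {1, -1})

/-- The generating set `{f_2, …, f_n, g}`. -/
def GenEven (n : ℕ) : Set (ℤ →. ℤ) :=
  {p | (∃ i : ℕ, 2 ≤ i ∧ i ≤ n ∧ p = fE n i) ∨ p = gE n}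

/-- Finite compositions of members of `G`. -/
inductive FinComp (G : Set (ℤ →. ℤ)) : (ℤ →. ℤ) → Prop
  | base {f : ℤ →. ℤ} : f ∈ G → FinComp G f
  | comp {f g : ℤ →. ℤ} : FinComp G f → FinComp G g → FinComp G (f.comp g)

/-! A partial endomorphism of `Z_{2n}` is an odd, strictly increasing map `h` from a symmetric
subset `D` into `Z_{2n}`. If some positive value `m ≥ 2` of `h` has `m - 1` missing from the
image, then `h = f_m ∘ h'`, where `h'` lowers the values `±m` to `±(m - 1)`; this decreases the
sum of the positive values. If instead the image has no gaps but `D` misses some `r + 1` below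
one of its elements, then `h = h' ∘ c_r`, where `c_r = g ∘ f_2 ∘ ⋯ ∘ f_{r+1}` fixes `|a| ≤ r`
and moves every other `a` one step towards `0`; this decreases `max D`. When neither `D` nor the
image has a gap, `D = Z_{2k}` and `h` is the identity of `Z_{2k}`, which for `k < n` is
`c_k ∘ c_{k+1} ∘ ⋯ ∘ c_{n-1}`. -/

theorem PFun.res_congr {α β : Type*} {f g : α → β} {s : Set α} (hfg : Set.EqOn f g s) :
    PFun.res f s = PFun.res g s :=
  PFun.ext fun a b => by
    simp only [PFun.mem_res]
    exact and_congr_right fun ha => by rw [hfg ha]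

theorem PFun.res_comp_res {α β γ : Type*} (f : β → γ) (g : α → β) (s : Set β) (t : Set α) :
    (PFun.res f s).comp (PFun.res g t) = PFun.res (f ∘ g) {a ∈ t | g a ∈ s} :=
  PFun.ext fun a c => by
    rw [PFun.comp_apply]
    refine Part.mem_bind_iff.trans ?_
    simp only [PFun.mem_res, Set.mem_ofPred_eq, Function.comp_apply]
    constructor
    · rintro ⟨b, ⟨ha, rfl⟩, hb, rfl⟩
      exact ⟨⟨ha, hb⟩, rfl⟩
    · rintro ⟨⟨ha, hb⟩, rfl⟩
      exact ⟨g a, ⟨ha, rfl⟩, hb, rfl⟩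

theorem FinComp.res_comp {G : Set (ℤ →. ℤ)} {f g h : ℤ → ℤ} {s t D : Set ℤ}
    (hf : FinComp G (PFun.res f s)) (hg : FinComp G (PFun.res g t))
    (hD : {a ∈ t | g a ∈ s} = D) (hh : Set.EqOn (f ∘ g) h D) :
    FinComp G (PFun.res h D) := by
  have hfg := hf.comp hg
  rwa [PFun.res_comp_res, hD, PFun.res_congr hh] at hfg

theorem mem_Zeven {n : ℕ} {a : ℤ} : a ∈ Zeven n ↔ (-(n : ℤ) ≤ a ∧ a ≤ n) ∧ a ≠ 0 := Iff.rfl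

def raise (i : ℕ) (a : ℤ) : ℤ :=
  if a = (i : ℤ) - 1 then (i : ℤ) else if a = -((i : ℤ) - 1) then -(i : ℤ) else a

def lower (i : ℕ) (a : ℤ) : ℤ :=
  if a = (i : ℤ) then (i : ℤ) - 1 else if a = -(i : ℤ) then -((i : ℤ) - 1) else a

def collapse (k : ℕ) (a : ℤ) : ℤ :=
  if -(k : ℤ) ≤ a ∧ a ≤ k then a else if 0 < a then a - 1 else a + 1

def expand (k : ℕ) (a : ℤ) : ℤ :=
  if -(k : ℤ) ≤ a ∧ a ≤ k then a else if 0 < a then a + 1 else a - 1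

theorem finComp_raise {n i : ℕ} (hi : 2 ≤ i) (hin : i ≤ n) :
    FinComp (GenEven n) (PFun.res (raise i) (Zeven n \ {(i : ℤ), -(i : ℤ)})) :=
  FinComp.base (Or.inl ⟨i, hi, hin, rfl⟩)

theorem finComp_collapse (n : ℕ) {k : ℕ} (hk : k < n) :
    FinComp (GenEven n) (PFun.res (collapse k) (Zeven n \ {(k : ℤ) + 1, -((k : ℤ) + 1)})) := by
  induction k with
  | zero =>
    have hg : FinComp (GenEven n) (gE n) := FinComp.base (Or.inr rfl)
    rw [gE, PFun.res_congr (g := collapse 0)] at hg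
    · simpa using hg
    · intro a ha
      simp only [Set.mem_sdiff, mem_Zeven] at ha
      simp only [collapse]
      split_ifs <;> omega
  | succ k ih =>
    refine (ih (by omega)).res_comp (finComp_raise (i := k + 2) (by omega) hk) ?_ ?_
    · ext a
      simp only [Set.mem_sdiff, Set.mem_ofPred_eq, mem_Zeven, Set.mem_insert_iff,
        Set.mem_singleton_iff, raise]
      push_cast
      split_ifs <;> omega
    · intro a ha
      simp only [Set.mem_sdiff, mem_Zeven, Set.mem_insert_iff, Set.mem_singleton_iff] at ha
      simp only [Function.comp_apply, raise, collapse]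
      push_cast
      split_ifs <;> omega

theorem finComp_id_Zeven {n k : ℕ} (hk : k < n) : FinComp (GenEven n) (PFun.res id (Zeven k)) := by
  obtain ⟨d, hd⟩ := Nat.exists_eq_add_of_lt hk
  induction d generalizing k with
  | zero =>
    subst hd
    convert finComp_collapse (k + 0 + 1) hk using 1
    refine (PFun.res_congr fun a ha => ?_).trans (congrArg _ ?_)
    · simp only [mem_Zeven] at ha
      simp only [id, collapse]
      split_ifs <;> omega
    · ext a
      simp only [Set.mem_sdiff, mem_Zeven, Set.mem_insert_iff, Set.mem_singleton_iff]
      push_cast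
      omega
  | succ d ih =>
    refine (finComp_collapse _ hk).res_comp (ih (k := k + 1) (by omega) (by omega)) ?_ ?_
    · ext a
      simp only [Set.mem_sdiff, Set.mem_ofPred_eq, mem_Zeven, Set.mem_insert_iff,
        Set.mem_singleton_iff, id]
      push_cast
      omega
    · intro a ha
      simp only [mem_Zeven] at ha
      simp only [Function.comp_apply, id, collapse]
      split_ifs <;> omega

theorem expand_collapse {r : ℕ} {a : ℤ} (h₀ : a ≠ 0) (h₁ : a ≠ r + 1) (h₂ : a ≠ -(r + 1)) :
    collapse r a ≠ 0 ∧ expand r (collapse r a) = a := by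
  simp only [collapse, expand]
  split_ifs <;> omega

theorem finComp_of_comp_expand {n r : ℕ} {D : Set ℤ} {h : ℤ → ℤ} (hr : r < n)
    (hsub : D ⊆ Zeven n) (hgap : ∀ a ∈ D, a ≠ r + 1 ∧ a ≠ -(r + 1))
    (H : FinComp (GenEven n) (PFun.res (h ∘ expand r) {x | x ≠ 0 ∧ expand r x ∈ D})) :
    FinComp (GenEven n) (PFun.res h D) := by
  refine H.res_comp (finComp_collapse n hr) ?_ fun a ha => ?_
  · ext a
    simp only [Set.mem_sdiff, Set.mem_insert_iff, Set.mem_singleton_iff, not_or,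
      Set.mem_ofPred_eq]
    constructor
    · rintro ⟨⟨ha, ha₁, ha₂⟩, -, haD⟩
      rwa [(expand_collapse ha.2 ha₁ ha₂).2] at haD
    · intro ha
      obtain ⟨ha₁, ha₂⟩ := hgap a ha
      obtain ⟨hc₀, hc⟩ := expand_collapse (hsub ha).2 ha₁ ha₂
      exact ⟨⟨hsub ha, ha₁, ha₂⟩, hc₀, by rwa [hc]⟩
  · obtain ⟨ha₁, ha₂⟩ := hgap a ha
    simp only [Function.comp_apply, (expand_collapse (hsub ha).2 ha₁ ha₂).2]

theorem finComp_of_lower_comp {n m : ℕ} {D : Set ℤ} {h : ℤ → ℤ} (hm : 2 ≤ m) (hmn : m ≤ n)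
    (hmaps : Set.MapsTo h D (Zeven n)) (hgap : ∀ a ∈ D, h a ≠ m - 1 ∧ h a ≠ -(m - 1))
    (H : FinComp (GenEven n) (PFun.res (lower m ∘ h) D)) :
    FinComp (GenEven n) (PFun.res h D) := by
  refine (finComp_raise hm hmn).res_comp H ?_ fun a ha => ?_
  · ext a
    simp only [Set.mem_sdiff, Set.mem_insert_iff, Set.mem_singleton_iff, Set.mem_ofPred_eq,
      Function.comp_apply, and_iff_left_iff_imp]
    intro ha
    have := hmaps ha
    have := hgap a ha
    simp only [mem_Zeven, lower] at *
    split_ifs <;> omega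
  · have := hgap a ha
    simp only [Function.comp_apply, raise, lower]
    split_ifs <;> omega

theorem expand_neg (r : ℕ) (a : ℤ) : expand r (-a) = -expand r a := by
  simp only [expand]
  split_ifs <;> omega

theorem strictMono_expand (r : ℕ) : StrictMono (expand r) := fun a b hab => by
  simp only [expand]
  split_ifs <;> omega

def IsGapless (S : Set ℤ) : Prop := ∀ a ∈ S, 2 ≤ a → a - 1 ∈ S

theorem IsGapless.mem_of_le {S : Set ℤ} (hS : IsGapless S) {a b : ℤ} (hb : b ∈ S) (ha : 1 ≤ a)
    (hab : a ≤ b) : a ∈ S := by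
  obtain ⟨d, rfl⟩ : ∃ d : ℕ, b = a + d := ⟨(b - a).toNat, by omega⟩
  induction d with
  | zero => simpa using hb
  | succ d ih =>
    refine ih ?_ (by omega)
    convert hS _ hb (by omega) using 1
    push_cast
    ring

theorem IsGapless.exists_eq_Zeven {n : ℕ} {D : Set ℤ} (hD : IsGapless D) (hsub : D ⊆ Zeven n)
    (hneg : ∀ a ∈ D, -a ∈ D) : ∃ k ≤ n, D = Zeven k := by
  classical
  set k := Nat.findGreatest (fun k : ℕ => (k : ℤ) ∈ D) n with hk
  have hpos : ∀ a, 0 < a → (a ∈ D ↔ a ≤ k) := by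
    refine fun a ha => ⟨fun haD => ?_, fun hak => ?_⟩
    · have := (hsub haD).1
      have := Nat.le_findGreatest (P := fun k : ℕ => (k : ℤ) ∈ D) (m := a.toNat) (n := n) (by omega)
        (by rwa [Int.toNat_of_nonneg ha.le])
      omega
    · exact hD.mem_of_le (Nat.findGreatest_of_ne_zero hk.symm (by omega)) ha hak
  refine ⟨k, Nat.findGreatest_le n, Set.ext fun a => ?_⟩
  rw [mem_Zeven]
  rcases lt_trichotomy a 0 with hlt | rfl | hgt
  · have hneg_iff : a ∈ D ↔ -a ∈ D := ⟨hneg a, fun h => neg_neg a ▸ hneg _ h⟩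
    rw [hneg_iff, hpos (-a) (by omega)]
    omega
  · simpa using fun h => (hsub h).2 rfl
  · rw [hpos a hgt]
    omega

structure IsOddOrderEmbedding (n : ℕ) (D : Set ℤ) (h : ℤ → ℤ) : Prop where
  subset : D ⊆ Zeven n
  neg_mem : ∀ a ∈ D, -a ∈ D
  map_neg : ∀ a ∈ D, h (-a) = -h a
  strictMonoOn : StrictMonoOn h D
  mapsTo : Set.MapsTo h D (Zeven n)

namespace IsOddOrderEmbedding

variable {n : ℕ} {D : Set ℤ} {h : ℤ → ℤ}

theorem pos_iff (H : IsOddOrderEmbedding n D h) {a : ℤ} (ha : a ∈ D) : 0 < h a ↔ 0 < a := by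
  have hna := H.neg_mem a ha
  have := (H.subset ha).2
  rcases lt_or_gt_of_ne this with hlt | hgt
  · have := H.strictMonoOn ha hna (by omega)
    rw [H.map_neg a ha] at this
    omega
  · have := H.strictMonoOn hna ha (by omega)
    rw [H.map_neg a ha] at this
    omega

theorem comp_expand (H : IsOddOrderEmbedding n D h) (r : ℕ) :
    IsOddOrderEmbedding n {x | x ≠ 0 ∧ expand r x ∈ D} (h ∘ expand r) where
  subset x hx := by
    have := H.subset hx.2
    simp only [mem_Zeven, expand] at this ⊢
    split_ifs at this <;> omega
  neg_mem x hx := ⟨neg_ne_zero.mpr hx.1, by rw [expand_neg]; exact H.neg_mem _ hx.2⟩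
  map_neg x hx := by simp only [Function.comp_apply, expand_neg, H.map_neg _ hx.2]
  strictMonoOn _ hx _ hy hxy := H.strictMonoOn hx.2 hy.2 (strictMono_expand r hxy)
  mapsTo _ hx := H.mapsTo hx.2

theorem lower_comp (H : IsOddOrderEmbedding n D h) {m : ℕ} (hm : 2 ≤ m)
    (hgap : ∀ a ∈ D, h a ≠ m - 1 ∧ h a ≠ -(m - 1)) :
    IsOddOrderEmbedding n D (lower m ∘ h) where
  subset := H.subset
  neg_mem := H.neg_mem
  map_neg a ha := by
    simp only [Function.comp_apply, H.map_neg a ha, lower]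
    split_ifs <;> omega
  strictMonoOn a ha b hb hab := by
    have := H.strictMonoOn ha hb hab
    have := hgap a ha
    have := hgap b hb
    simp only [Function.comp_apply, lower]
    split_ifs <;> omega
  mapsTo a ha := by
    have := H.mapsTo ha
    simp only [Function.comp_apply, mem_Zeven, lower] at this ⊢
    split_ifs <;> omega

theorem eq_self_of_isGapless (H : IsOddOrderEmbedding n D h) (hD : IsGapless D)
    (hI : IsGapless (h '' D)) {a : ℤ} (ha : a ∈ D) : h a = a := by
  suffices hpos : ∀ i : ℕ, ∀ a ∈ D, a = i + 1 → h a = a by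
    rcases lt_or_gt_of_ne (H.subset ha).2 with hlt | hgt
    · have := hpos (-a - 1).toNat (-a) (H.neg_mem a ha) (by omega)
      rw [H.map_neg a ha] at this
      omega
    · exact hpos (a - 1).toNat a ha (by omega)
  intro i
  induction i using Nat.strong_induction_on with
  | _ i ih =>
  rintro a ha rfl
  -- `h a ≥ a` because `h` fixes `a - 1`; `h a ≤ a` because `h a - 1` is again a value of `h`
  have hge : (i : ℤ) + 1 ≤ h (i + 1) := by
    rcases i with _ | i
    · have := (H.pos_iff ha).mpr (by omega)
      simp only [Nat.cast_zero, zero_add] at this ⊢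
      omega
    · have hpred : ((i : ℕ) : ℤ) + 1 ∈ D := by
        convert hD _ ha (by omega) using 1
        push_cast
        ring
      have := ih i (by omega) _ hpred rfl
      have := H.strictMonoOn hpred ha (by push_cast; omega)
      push_cast at *
      omega
  by_contra hne
  obtain ⟨c, hc, hc'⟩ := hI _ ⟨_, ha, rfl⟩ (by omega)
  have hca : c < i + 1 := (H.strictMonoOn.lt_iff_lt hc ha).mp (by omega)
  have hc₀ : 0 < c := (H.pos_iff hc).mp (by omega)
  have := ih (c - 1).toNat (by omega) c hc (by omega)
  omega

end IsOddOrderEmbedding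

theorem PartialEnd.isOddOrderEmbedding {n : ℕ} {D : Set ℤ} {h : ℤ → ℤ}
    (hpe : PartialEnd (Zeven n) D h) : IsOddOrderEmbedding n D h := by
  obtain ⟨⟨-, hsub, hcl⟩, ⟨-, himg, -⟩, hmaps, hom⟩ := hpe
  have map_neg : ∀ a ∈ D, h (-a) = -h a := fun a ha => (hom a ha a ha).2.2.1
  refine ⟨hsub, fun a ha => (hcl a ha a ha).2.2.1, map_neg, fun a ha b hb hab => ?_,
    hmaps.mono_right himg⟩
  have hle : h a ≤ h b := by
    rw [← max_eq_right_iff, ← (hom a ha b hb).2.1, max_eq_right hab.le]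
  refine hle.lt_of_ne fun heq => ?_
  -- `h` sends `b → a = min (-b) a` to `h b → h a = max (-h a) (h a)`, which forces `h a = 0`
  have himp := (hom b hb a ha).2.2.2
  rw [SImp, SImp, if_neg (not_le.mpr hab), if_pos heq.ge, (hom (-b) (hcl b hb b hb).2.2.1 a ha).1,
    map_neg b hb, ← heq] at himp
  have := (himg (hmaps ha)).2
  omega

theorem finComp_of_isGapless {n : ℕ} {D : Set ℤ} {h : ℤ → ℤ} (H : IsOddOrderEmbedding n D h)
    (hD : IsGapless D) (hI : IsGapless (h '' D)) (hid : ¬(D = Zeven n ∧ ∀ a ∈ D, h a = a)) :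
    FinComp (GenEven n) (PFun.res h D) := by
  have hself : ∀ a ∈ D, h a = a := fun a ha => H.eq_self_of_isGapless hD hI ha
  obtain ⟨k, hk, rfl⟩ := hD.exists_eq_Zeven H.subset H.neg_mem
  have hkn : k < n := hk.lt_of_ne fun hkn => hid ⟨hkn ▸ rfl, hself⟩
  rw [PFun.res_congr hself]
  exact finComp_id_Zeven hkn

theorem finComp_of_isGapless_image {n : ℕ} {D : Set ℤ} {h : ℤ → ℤ}
    (H : IsOddOrderEmbedding n D h) (hI : IsGapless (h '' D))
    (hid : ¬(D = Zeven n ∧ ∀ a ∈ D, h a = a)) : FinComp (GenEven n) (PFun.res h D) := by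
  obtain ⟨N, hN⟩ : ∃ N : ℕ, ∀ a ∈ D, a ≤ N := ⟨n, fun a ha => (H.subset ha).1.2⟩
  induction N using Nat.strong_induction_on generalizing D h with
  | _ N ih =>
  by_cases hD : IsGapless D
  · exact finComp_of_isGapless H hD hI hid
  obtain ⟨p, hp, hp₂, hp₁⟩ : ∃ p ∈ D, 2 ≤ p ∧ p - 1 ∉ D := by simpa [IsGapless] using hD
  have hpN := hN p hp
  have hpn := (H.subset hp).1.2
  set r := (p - 2).toNat
  have hr : (r : ℤ) + 1 = p - 1 := by omega
  have hgap : ∀ a ∈ D, a ≠ r + 1 ∧ a ≠ -(r + 1) := by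
    refine fun a ha => ⟨?_, ?_⟩ <;> rintro rfl
    · exact hp₁ (hr ▸ ha)
    · exact hp₁ (by simpa [hr] using H.neg_mem _ ha)
  have himage : (h ∘ expand r) '' {x | x ≠ 0 ∧ expand r x ∈ D} = h '' D := by
    ext y
    constructor
    · rintro ⟨x, ⟨-, hx⟩, rfl⟩
      exact ⟨_, hx, rfl⟩
    · rintro ⟨a, ha, rfl⟩
      obtain ⟨hc₀, hc⟩ := expand_collapse (H.subset ha).2 (hgap a ha).1 (hgap a ha).2
      exact ⟨collapse r a, ⟨hc₀, hc.symm ▸ ha⟩, by simp only [Function.comp_apply, hc]⟩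
  have hbound : ∀ x ∈ {x | x ≠ 0 ∧ expand r x ∈ D}, x ≤ ((N - 1 : ℕ) : ℤ) := by
    rintro x ⟨-, hx⟩
    have := hN _ hx
    simp only [expand] at this
    split_ifs at this <;> omega
  have hid' : ¬({x | x ≠ 0 ∧ expand r x ∈ D} = Zeven n ∧
      ∀ a ∈ {x | x ≠ 0 ∧ expand r x ∈ D}, (h ∘ expand r) a = a) := by
    rintro ⟨hfull, -⟩
    have hn : (n : ℤ) ∈ Zeven n := ⟨⟨by omega, le_rfl⟩, by omega⟩
    rw [← hfull] at hn
    have := (H.subset hn.2).1.2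
    simp only [expand] at this
    split_ifs at this <;> omega
  exact finComp_of_comp_expand (by omega) H.subset hgap
    (ih (N - 1) (by omega) (H.comp_expand r) (himage ▸ hI) hid' hbound)

theorem finComp_of_isOddOrderEmbedding {n : ℕ} {D : Set ℤ} {h : ℤ → ℤ}
    (H : IsOddOrderEmbedding n D h) (hid : ¬(D = Zeven n ∧ ∀ a ∈ D, h a = a)) :
    FinComp (GenEven n) (PFun.res h D) := by
  induction hN : ∑ a ∈ Finset.Icc (-(n : ℤ)) n, (h a).toNat using Nat.strong_induction_on
    generalizing h with
  | _ N ih =>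
  by_cases hI : IsGapless (h '' D)
  · exact finComp_of_isGapless_image H hI hid
  obtain ⟨b, hb, hb₂, hb₁⟩ : ∃ b ∈ D, 2 ≤ h b ∧ ∀ a ∈ D, h a ≠ h b - 1 := by
    simpa [IsGapless] using hI
  set m := (h b).toNat
  have hm : (m : ℤ) = h b := Int.toNat_of_nonneg (by omega)
  have hmn : m ≤ n := by
    have := (H.mapsTo hb).1.2
    omega
  have hgap : ∀ a ∈ D, h a ≠ m - 1 ∧ h a ≠ -(m - 1) := fun a ha =>
    ⟨hm ▸ hb₁ a ha, fun e => hb₁ (-a) (H.neg_mem a ha) (by rw [H.map_neg a ha, e, hm]; ring)⟩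
  have hlt : ∑ a ∈ Finset.Icc (-(n : ℤ)) n, ((lower m ∘ h) a).toNat < N := by
    rw [← hN]
    refine Finset.sum_lt_sum (fun a _ => ?_) ⟨b, Finset.mem_Icc.mpr (H.subset hb).1, ?_⟩
    all_goals
      simp only [Function.comp_apply, lower]
      split_ifs <;> omega
  have hid' : ¬(D = Zeven n ∧ ∀ a ∈ D, (lower m ∘ h) a = a) := by
    rintro ⟨hD, hself⟩
    have := hself m (hD ▸ ⟨⟨by omega, by omega⟩, by omega⟩)
    simp only [Function.comp_apply, lower] at this
    split_ifs at this <;> omega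
  exact finComp_of_lower_comp (by omega) hmn H.mapsTo hgap
    (ih _ hlt (H.lower_comp (by omega) hgap) hid' rfl)

theorem stmt7_general (n : ℕ) (D : Set ℤ) (h : ℤ → ℤ)
    (hpe : PartialEnd (Zeven n) D h)
    (hid : ¬(D = Zeven n ∧ ∀ a ∈ D, h a = a)) :
    ∃ φ : ℤ →. ℤ, FinComp (GenEven n) φ ∧ φ.Dom = D ∧ ∀ a ∈ D, h a ∈ φ a :=
  ⟨PFun.res h D, finComp_of_isOddOrderEmbedding hpe.isOddOrderEmbedding hid,
    Set.ext fun a => by simp [PFun.mem_dom, PFun.mem_res],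
    fun a ha => (PFun.mem_res h D a _).mpr ⟨ha, rfl⟩⟩

theorem stmt7 (n : ℕ) (hn : 2 ≤ n) (D : Set ℤ) (h : ℤ → ℤ)
    (hpe : PartialEnd (Zeven n) D h)
    (hid : ¬(D = Zeven n ∧ ∀ a ∈ D, h a = a)) :
    ∃ φ : ℤ →. ℤ, FinComp (GenEven n) φ ∧ φ.Dom = D ∧ ∀ a ∈ D, h a ∈ φ a :=
  stmt7_general n D h hpe hid
end

section
/- Let n ≥ 1. Every partial endomorphism of Z_{2n+1} other than the identity map of Z_{2n+1} equals, as a partial function on Z_{2n+1} (same domain and same values), a finite composition of the maps f_0, f_1, …, f_n, g. -/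
/-- The partial endomorphism `f_i` of `Z_{2n+1}` (for `0 ≤ i ≤ n`), as a partial function. -/
def fO (n i : ℕ) : ℤ →. ℤ :=
  PFun.res
    (fun a => if 2 ≤ i then
        (if a = (i : ℤ) - 1 then (i : ℤ) else if a = -((i : ℤ) - 1) then -(i : ℤ) else a)
      else a)
    (Zodd n \ {(i : ℤ), -(i : ℤ)})

/-- The endomorphism `g` of `Z_{2n+1}`, as a partial function with domain `Z_{2n+1}`. -/
def gO (n : ℕ) : ℤ →. ℤ :=
  PFun.res (fun a => if 0 < a then a - 1 else if a < 0 then a + 1 else 0) (Zodd n)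

/-- The generating set `{f_0, f_1, …, f_n, g}`. -/
def GenOdd (n : ℕ) : Set (ℤ →. ℤ) :=
  {p | (∃ i : ℕ, i ≤ n ∧ p = fO n i) ∨ p = gO n}

/-!
A partial endomorphism of `Z_{2n+1}` is an odd monotone map `h` on a symmetric domain `D` that
is injective off its zero fibre (`Admissible`). Generators are peeled off `h` by well-founded
induction, each step leaving an admissible map that is smaller in a suitable measure.

* If some value `v ≥ 2` of `h` has no predecessor `v - 1` among the values, then `h = f_v ∘ h'`
  where `h'` takes the value `v - 1` instead of `v`. So we may assume the positive values of `h`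
  are `1, …, r` (`GapFree`).
* If `h` has a positive zero, let `t` be the largest one; then `h = g ∘ h'` where `h'` adds `1`
  to `h` on `[t, n]` (and `-1` on `[-n, -t]`). Since the values are gap-free, `h ≤ n - 1` on
  `[t, n]`, so `h'` stays in `Z_{2n+1}`.
* Otherwise `h` is injective. If `1 ∉ D`, then `h = h' ∘ f_1` with `h'` extending `h` by
  `±1 ↦ 0`; if `x ∉ D` with `x - 1 ∈ D`, then `h = h' ∘ f_x` with `h'` defined on the image of
  `D` under `f_x`. Either way the positive holes of `D` get smaller.
* When `D` has no positive hole, the gap-free injective map `h` is the identity, i.e. `f_0` or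
  the identity map of `Z_{2n+1}`.
-/

open Set

namespace PFun

variable {α β γ : Type*}

theorem res_congr_s8 {f g : α → β} {s t : Set α} (hst : s = t) (hfg : EqOn f g s) :
    res f s = res g t :=
  hst ▸ PFun.ext fun a b => by
    simp only [mem_res]
    exact ⟨fun ⟨ha, hb⟩ => ⟨ha, (hfg ha).symm.trans hb⟩, fun ⟨ha, hb⟩ => ⟨ha, (hfg ha).trans hb⟩⟩

theorem res_comp_res_s8 (f : α → β) (g : β → γ) (s : Set α) (t : Set β) :
    (res g t).comp (res f s) = res (g ∘ f) (s ∩ f ⁻¹' t) :=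
  PFun.ext fun a c => by
    rw [comp_apply]
    refine Part.mem_bind_iff.trans ?_
    simp only [mem_res, mem_inter_iff, Function.comp_apply]
    constructor
    · rintro ⟨b, ⟨ha, rfl⟩, hb, rfl⟩
      exact ⟨⟨ha, hb⟩, rfl⟩
    · rintro ⟨⟨ha, hb⟩, rfl⟩
      exact ⟨f a, ⟨ha, rfl⟩, hb, rfl⟩

end PFun

lemma FinComp.mem_Zodd_of_mem {n : ℕ} {φ : ℤ →. ℤ} (hφ : FinComp (GenOdd n) φ) {a b : ℤ}
    (hb : b ∈ φ a) : a ∈ Zodd n ∧ b ∈ Zodd n := by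
  induction hφ generalizing a b with
  | base hp =>
    rcases hp with ⟨i, hi, rfl⟩ | rfl
    · simp only [fO, PFun.mem_res, mem_sdiff] at hb
      obtain ⟨⟨ha, -⟩, rfl⟩ := hb
      refine ⟨ha, ?_⟩
      simp only [Zodd, mem_ofPred_eq] at ha ⊢
      split_ifs <;> omega
    · simp only [gO, PFun.mem_res] at hb
      obtain ⟨ha, rfl⟩ := hb
      refine ⟨ha, ?_⟩
      simp only [Zodd, mem_ofPred_eq] at ha ⊢
      split_ifs <;> omega
  | comp _ _ ihf ihg =>
    obtain ⟨c, hc, hb⟩ := Part.mem_bind_iff.1 (PFun.comp_apply _ _ _ ▸ hb)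
    exact ⟨(ihg hc).1, (ihf hb).2⟩

namespace Sugihara

variable {n : ℕ}

lemma mem_Zodd {a : ℤ} : a ∈ Zodd n ↔ -(n : ℤ) ≤ a ∧ a ≤ n := Iff.rfl

def raise (v a : ℤ) : ℤ := if a = v - 1 then v else if a = -(v - 1) then -v else a

def lower (v a : ℤ) : ℤ := if a = v then v - 1 else if a = -v then -(v - 1) else a

def towardZero (a : ℤ) : ℤ := if 0 < a then a - 1 else if a < 0 then a + 1 else 0

section raiseLower

variable {v : ℤ}

lemma raise_lower (hv : 2 ≤ v) {a : ℤ} (ha : a ≠ v - 1) (ha' : a ≠ -(v - 1)) :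
    raise v (lower v a) = a := by
  unfold raise lower; split_ifs <;> omega

lemma lower_raise (hv : 2 ≤ v) {a : ℤ} (ha : a ≠ v) (ha' : a ≠ -v) : lower v (raise v a) = a := by
  unfold raise lower; split_ifs <;> omega

lemma raise_neg (hv : 2 ≤ v) (a : ℤ) : raise v (-a) = -raise v a := by
  unfold raise; split_ifs <;> omega

lemma lower_neg (hv : 1 ≤ v) (a : ℤ) : lower v (-a) = -lower v a := by
  unfold lower; split_ifs <;> omega

lemma raise_ne (hv : 1 ≤ v) (a : ℤ) : raise v a ≠ v - 1 ∧ raise v a ≠ -(v - 1) := by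
  unfold raise; split_ifs <;> omega

lemma lower_ne (hv : 1 ≤ v) (a : ℤ) : lower v a ≠ v ∧ lower v a ≠ -v := by
  unfold lower; split_ifs <;> omega

lemma lower_le (hv : 1 ≤ v) {a : ℤ} (ha : 0 ≤ a) : lower v a ≤ a := by
  unfold lower; split_ifs <;> omega

lemma lower_mem_Zodd (hv : 1 ≤ v) {a : ℤ} (ha : a ∈ Zodd n) : lower v a ∈ Zodd n := by
  rw [mem_Zodd] at *
  unfold lower
  split_ifs <;> omega

lemma raise_mem_Zodd (hv : v ≤ n) {a : ℤ} (ha : a ∈ Zodd n) : raise v a ∈ Zodd n := by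
  rw [mem_Zodd] at *
  unfold raise
  split_ifs <;> omega

lemma lower_strictMonoOn (hv : 2 ≤ v) :
    StrictMonoOn (lower v) {a | a ≠ v - 1 ∧ a ≠ -(v - 1)} := by
  rintro a ⟨ha, ha'⟩ b ⟨hb, hb'⟩ hab
  unfold lower; split_ifs <;> omega

end raiseLower

def Realizable (n : ℕ) (D : Set ℤ) (h : ℤ → ℤ) : Prop :=
  FinComp (GenOdd n) (PFun.res h D)

def RealizableOrId (n : ℕ) (D : Set ℤ) (h : ℤ → ℤ) : Prop :=
  Realizable n D h ∨ (D = Zodd n ∧ ∀ a ∈ D, h a = a)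

namespace Realizable

variable {D E D' : Set ℤ} {h u v : ℤ → ℤ}

lemma subset (hh : Realizable n D h) : D ⊆ Zodd n := fun _ ha =>
  (hh.mem_Zodd_of_mem ((PFun.mem_res _ _ _ _).2 ⟨ha, rfl⟩)).1

lemma mapsTo (hh : Realizable n D h) : MapsTo h D (Zodd n) := fun _ ha =>
  (hh.mem_Zodd_of_mem ((PFun.mem_res _ _ _ _).2 ⟨ha, rfl⟩)).2

lemma congr (hh : Realizable n D h) (hD : D = D') (heq : EqOn h u D) : Realizable n D' u := by
  rwa [Realizable, ← PFun.res_congr_s8 hD heq]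

lemma comp (hv : Realizable n E v) (hu : Realizable n D u)
    (hD' : ∀ x, x ∈ D' ↔ x ∈ D ∧ u x ∈ E) (heq : ∀ x ∈ D', h x = v (u x)) :
    Realizable n D' h := by
  have : Realizable n (D ∩ u ⁻¹' E) (v ∘ u) := by
    rw [Realizable, ← PFun.res_comp_res_s8]
    exact FinComp.comp hv hu
  exact this.congr (Set.ext fun x => (hD' x).symm) fun x hx => (heq x ((hD' x).2 hx)).symm

end Realizable

namespace RealizableOrId

variable {D E S : Set ℤ} {h u v F : ℤ → ℤ}

lemma comp_left (hu : RealizableOrId n D u) (hF : Realizable n E F) (hmaps : MapsTo u D E)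
    (heq : ∀ x ∈ D, h x = F (u x)) : Realizable n D h := by
  rcases hu with hu | ⟨rfl, hid⟩
  · exact hF.comp hu (fun x => ⟨fun hx => ⟨hx, hmaps hx⟩, And.left⟩) heq
  · have hE : E = Zodd n := Subset.antisymm hF.subset fun x hx => hid x hx ▸ hmaps hx
    subst hE
    exact hF.congr rfl fun x hx => by rw [heq x hx, hid x hx]

lemma comp_right (hv : RealizableOrId n E v) (hF : Realizable n S F)
    (hD : ∀ x, x ∈ D ↔ x ∈ S ∧ F x ∈ E) (heq : ∀ x ∈ D, h x = v (F x)) :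
    Realizable n D h := by
  rcases hv with hv | ⟨rfl, hid⟩
  · exact hv.comp hF hD heq
  · have hS : S = D := Set.ext fun x =>
      ⟨fun hx => (hD x).2 ⟨hx, hF.mapsTo hx⟩, fun hx => ((hD x).1 hx).1⟩
    subst hS
    exact hF.congr rfl fun x hx => by rw [heq x hx, hid _ (hF.mapsTo hx)]

end RealizableOrId

lemma realizable_id_compl_zero : Realizable n (Zodd n \ {0}) id := by
  have : fO n 0 = PFun.res id (Zodd n \ {0}) := by simp [fO]; rfl
  rw [Realizable, ← this]
  exact FinComp.base (Or.inl ⟨0, Nat.zero_le n, rfl⟩)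

lemma realizable_id_compl_one (hn : 1 ≤ n) : Realizable n (Zodd n \ {1, -1}) id := by
  have : fO n 1 = PFun.res id (Zodd n \ {1, -1}) := by simp [fO]; rfl
  rw [Realizable, ← this]
  exact FinComp.base (Or.inl ⟨1, hn, rfl⟩)

lemma realizable_raise {v : ℤ} (hv : 2 ≤ v) (hvn : v ≤ n) :
    Realizable n (Zodd n \ {v, -v}) (raise v) := by
  have hcast : ((v.toNat : ℕ) : ℤ) = v := Int.toNat_of_nonneg (by omega)
  have : fO n v.toNat = PFun.res (raise v) (Zodd n \ {v, -v}) := by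
    simp only [fO, hcast, if_pos (show 2 ≤ v.toNat by omega)]; rfl
  rw [Realizable, ← this]
  exact FinComp.base (Or.inl ⟨v.toNat, by omega, rfl⟩)

lemma realizable_towardZero : Realizable n (Zodd n) towardZero :=
  FinComp.base (Or.inr rfl)

/-- The order-theoretic content of being a partial endomorphism of `Z_{2n+1}`
(see `PartialEnd.admissible`). -/
structure Admissible (n : ℕ) (D : Set ℤ) (h : ℤ → ℤ) : Prop where
  subset : D ⊆ Zodd n
  neg_mem : ∀ a ∈ D, -a ∈ D
  mapsTo : MapsTo h D (Zodd n)
  monotoneOn : MonotoneOn h D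
  map_neg : ∀ a ∈ D, h (-a) = -h a
  eq_zero_of_lt : ∀ a ∈ D, ∀ b ∈ D, a < b → h a = h b → h a = 0

def GapFree (D : Set ℤ) (h : ℤ → ℤ) : Prop :=
  ∀ b ∈ D, 2 ≤ h b → ∃ a ∈ D, h a = h b - 1

namespace Admissible

variable {D : Set ℤ} {h : ℤ → ℤ}

lemma nonneg (hh : Admissible n D h) {a : ℤ} (ha : a ∈ D) (ha0 : 0 ≤ a) : 0 ≤ h a := by
  have := hh.monotoneOn (hh.neg_mem a ha) ha (by omega)
  have := hh.map_neg a ha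
  omega

lemma nonpos (hh : Admissible n D h) {a : ℤ} (ha : a ∈ D) (ha0 : a ≤ 0) : h a ≤ 0 := by
  have := hh.nonneg (hh.neg_mem a ha) (by omega)
  have := hh.map_neg a ha
  omega

lemma map_zero (hh : Admissible n D h) (h0 : 0 ∈ D) : h 0 = 0 := by
  have := hh.map_neg 0 h0
  simp only [neg_zero] at this
  omega

lemma lt_of_map_lt (hh : Admissible n D h) {a b : ℤ} (ha : a ∈ D) (hb : b ∈ D)
    (hab : h a < h b) : a < b :=
  lt_of_not_ge fun hba => (hh.monotoneOn hb ha hba).not_gt hab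

lemma pos_of_map_pos (hh : Admissible n D h) {b : ℤ} (hb : b ∈ D) (hpos : 0 < h b) : 0 < b := by
  have := hh.lt_of_map_lt (hh.neg_mem b hb) hb (by rw [hh.map_neg b hb]; omega)
  omega

lemma comp_left (hh : Admissible n D h) {σ : ℤ → ℤ} (hσ : StrictMonoOn σ (h '' D))
    (hσ_neg : ∀ a ∈ D, σ (-h a) = -σ (h a)) (hσ_mem : ∀ a ∈ D, σ (h a) ∈ Zodd n) :
    Admissible n D (σ ∘ h) where
  subset := hh.subset
  neg_mem := hh.neg_mem
  mapsTo := hσ_mem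
  monotoneOn := fun a ha b hb hab =>
    hσ.monotoneOn (mem_image_of_mem h ha) (mem_image_of_mem h hb) (hh.monotoneOn ha hb hab)
  map_neg := fun a ha => by simp only [Function.comp_apply, hh.map_neg a ha, hσ_neg a ha]
  eq_zero_of_lt := fun a ha b hb hab heq => by
    have h0 := hh.eq_zero_of_lt a ha b hb hab
      (hσ.injOn (mem_image_of_mem h ha) (mem_image_of_mem h hb) heq)
    have := hσ_neg a ha
    simp only [Function.comp_apply, h0, neg_zero] at this ⊢
    omega

lemma comp_right (hh : Admissible n D h) {D' : Set ℤ} {ρ : ℤ → ℤ} (hsub : D' ⊆ Zodd n)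
    (hneg : ∀ a ∈ D', -a ∈ D') (hρ : StrictMonoOn ρ D') (hρ_neg : ∀ a ∈ D', ρ (-a) = -ρ a)
    (hmaps : MapsTo ρ D' D) : Admissible n D' (h ∘ ρ) where
  subset := hsub
  neg_mem := hneg
  mapsTo := hh.mapsTo.comp hmaps
  monotoneOn := hh.monotoneOn.comp hρ.monotoneOn hmaps
  map_neg := fun a ha => by
    simp only [Function.comp_apply, hρ_neg a ha, hh.map_neg _ (hmaps ha)]
  eq_zero_of_lt := fun a ha b hb hab =>
    hh.eq_zero_of_lt _ (hmaps ha) _ (hmaps hb) (hρ ha hb hab)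

end Admissible

lemma GapFree.comp_right {D D' : Set ℤ} {h ρ : ℤ → ℤ} (hgap : GapFree D h)
    (hmaps : MapsTo ρ D' D) (hsurj : SurjOn ρ D' D) : GapFree D' (h ∘ ρ) := by
  intro b hb hb2
  obtain ⟨a, ha, hab⟩ := hgap (ρ b) (hmaps hb) hb2
  obtain ⟨a', ha', rfl⟩ := hsurj ha
  exact ⟨a', ha', hab⟩

lemma GapFree.map_add_le {D : Set ℤ} {h : ℤ → ℤ} (hgap : GapFree D h) (hh : Admissible n D h)
    {c : ℤ} (hc : ∀ b ∈ D, h b = 1 → c < b) {b : ℤ} (hb : b ∈ D) (hpos : 0 < h b) :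
    h b + c ≤ b := by
  obtain ⟨k, hk⟩ : ∃ k : ℕ, h b = k + 1 := ⟨(h b - 1).toNat, by omega⟩
  induction k generalizing b with
  | zero => have := hc b hb (by simpa using hk); omega
  | succ k ih =>
    obtain ⟨a, ha, hab⟩ := hgap b hb (by omega)
    have := ih ha (by omega) (by push_cast at hk; omega)
    have := hh.lt_of_map_lt ha hb (by omega)
    omega

lemma _root_.PartialEnd.admissible {D : Set ℤ} {h : ℤ → ℤ} (hpe : PartialEnd (Zodd n) D h) :
    Admissible n D h := by
  obtain ⟨⟨-, hsub, hcl⟩, ⟨-, hran, -⟩, -, hpres⟩ := hpe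
  refine ⟨hsub, fun a ha => (hcl a ha a ha).2.2.1, fun a ha => hran ⟨a, ha, rfl⟩,
    fun a ha b hb hab => ?_, fun a ha => (hpres a ha a ha).2.2.1, fun a ha b hb hab heq => ?_⟩
  · have := (hpres a ha b hb).1
    rw [min_eq_left hab] at this
    exact this ▸ min_le_right _ _
  · -- Preserving `b → a = min (-b) a` gives `min (-h a) (h a) = max (-h a) (h a)`.
    have himp := (hpres b hb a ha).2.2.2
    have hmin := (hpres (-b) (hcl b hb b hb).2.2.1 a ha).1
    rw [(hpres b hb b hb).2.2.1] at hmin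
    simp only [SImp, if_neg (not_le.2 hab), hmin, ← heq] at himp
    rcases le_total (h a) 0 with hc | hc
    · rw [min_eq_right (by omega), max_eq_left (by omega)] at himp; omega
    · rw [min_eq_left (by omega), max_eq_right (by omega)] at himp; omega

open scoped Classical in
noncomputable def posSum (n : ℕ) (D : Set ℤ) (f : ℤ → ℤ) : ℕ :=
  ∑ k ∈ Finset.Icc (1 : ℤ) n, if k ∈ D then (f k).toNat else 0

lemma posSum_lt_posSum {D : Set ℤ} {f f' : ℤ → ℤ} (hle : ∀ k ∈ D, 0 < k → f k ≤ f' k)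
    {k₀ : ℤ} (hk₀ : k₀ ∈ D) (hk₀_pos : 0 < k₀) (hk₀_le : k₀ ≤ n) (hlt : f k₀ < f' k₀)
    (hpos : 0 < f' k₀) : posSum n D f < posSum n D f' := by
  apply Finset.sum_lt_sum
  · intro k hk
    rw [Finset.mem_Icc] at hk
    split_ifs with hkD
    · have := hle k hkD (by omega); omega
    · rfl
  · exact ⟨k₀, Finset.mem_Icc.2 ⟨hk₀_pos, hk₀_le⟩, by simp only [if_pos hk₀]; omega⟩

open scoped Classical in
noncomputable def holeWeight (n : ℕ) (D : Set ℤ) : ℕ :=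
  ∑ k ∈ Finset.Icc (1 : ℤ) n, if k ∈ D then 0 else k.toNat

lemma holeWeight_lt_of_subset {D D' : Set ℤ} (hsub : D ⊆ D') {k₀ : ℤ} (hk₀ : k₀ ∈ D')
    (hk₀D : k₀ ∉ D) (hk₀_pos : 0 < k₀) (hk₀_le : k₀ ≤ n) : holeWeight n D' < holeWeight n D := by
  apply Finset.sum_lt_sum
  · intro k _
    by_cases hk : k ∈ D
    · simp only [if_pos (hsub hk), if_pos hk, le_refl]
    · split_ifs <;> omega
  · exact ⟨k₀, Finset.mem_Icc.2 ⟨hk₀_pos, hk₀_le⟩, by simp only [if_pos hk₀, if_neg hk₀D]; omega⟩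

lemma holeWeight_lt_of_move {D D' : Set ℤ} {x : ℤ} (hx : 2 ≤ x) (hxn : x ≤ n) (hxD : x ∉ D)
    (hx1D : x - 1 ∈ D) (hxD' : x ∈ D') (hx1D' : x - 1 ∉ D')
    (hD' : ∀ k, 0 < k → k ≠ x → k ≠ x - 1 → (k ∈ D' ↔ k ∈ D)) :
    holeWeight n D' < holeWeight n D := by
  have hxI : x ∈ Finset.Icc (1 : ℤ) n := Finset.mem_Icc.2 ⟨by omega, hxn⟩
  have hx1I : x - 1 ∈ (Finset.Icc (1 : ℤ) n).erase x :=
    Finset.mem_erase.2 ⟨by omega, Finset.mem_Icc.2 ⟨by omega, by omega⟩⟩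
  unfold holeWeight
  rw [← Finset.add_sum_erase _ _ hxI, ← Finset.add_sum_erase _ _ hx1I,
    ← Finset.add_sum_erase _ _ hxI, ← Finset.add_sum_erase _ _ hx1I,
    Finset.sum_congr rfl fun k hk => by
      have hk' := Finset.mem_of_mem_erase hk
      have := Finset.mem_Icc.1 (Finset.mem_of_mem_erase hk')
      rw [hD' k (by omega) (Finset.ne_of_mem_erase hk') (Finset.ne_of_mem_erase hk)]]
  simp only [if_pos hxD', if_neg hx1D', if_neg hxD, if_pos hx1D]
  omega

def liftAbove (h : ℤ → ℤ) (t a : ℤ) : ℤ :=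
  h a + if t ≤ a then 1 else if a ≤ -t then -1 else 0

section liftAbove

variable {D : Set ℤ} {h : ℤ → ℤ} {t : ℤ}

lemma Admissible.map_eq_zero_of_neg_lt_of_lt (hh : Admissible n D h) (htD : t ∈ D) (hht : h t = 0)
    {a : ℤ} (ha : a ∈ D) (hat : -t < a) (hta : a < t) : h a = 0 := by
  have := hh.monotoneOn ha htD hta.le
  have := hh.monotoneOn (hh.neg_mem t htD) ha hat.le
  have := hh.map_neg t htD
  omega

lemma admissible_liftAbove (hh : Admissible n D h) (hgap : GapFree D h) (htD : t ∈ D)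
    (ht : 0 < t) (hht : h t = 0) (hmax : ∀ a ∈ D, 0 < a → h a = 0 → a ≤ t) :
    Admissible n D (liftAbove h t) := by
  have hbound : ∀ a ∈ D, t ≤ a → h a ≤ n - 1 := fun a ha hta => by
    have := (hh.subset ha).2
    rcases (hh.nonneg ha (by omega)).eq_or_lt with h0 | hpos
    · omega
    · have := hgap.map_add_le hh (fun b hb hb1 => hh.lt_of_map_lt htD hb (by omega)) ha hpos
      omega
  refine ⟨hh.subset, hh.neg_mem, fun a ha => ?_, fun a ha b hb hab => ?_, fun a ha => ?_,
    fun a ha b hb hab heq => ?_⟩ <;> unfold liftAbove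
  · have := hh.mapsTo ha
    have := hh.map_neg a ha
    rw [mem_Zodd] at *
    split_ifs
    · have := hh.nonneg ha (by omega); have := hbound a ha (by omega); omega
    · have := hh.nonpos ha (by omega); have := hbound (-a) (hh.neg_mem a ha) (by omega); omega
    · omega
  · have := hh.monotoneOn ha hb hab
    split_ifs <;> omega
  · have := hh.map_neg a ha
    split_ifs <;> omega
  · have key : h a < h b ∨ h a = 0 :=
      (hh.monotoneOn ha hb hab.le).lt_or_eq.imp_right (hh.eq_zero_of_lt a ha b hb hab)
    have hb_pos : b ≤ t ∨ 0 < h b := or_iff_not_imp_left.2 fun htb =>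
      (hh.nonneg hb (by omega)).lt_of_ne' fun h0 => by have := hmax b hb (by omega) h0; omega
    have ha_neg : -a ≤ t ∨ h a < 0 := or_iff_not_imp_left.2 fun hta => by
      have := hh.map_neg a ha
      have := (hh.nonneg (hh.neg_mem a ha) (by omega)).lt_of_ne' fun h0 => by
        have := hmax (-a) (hh.neg_mem a ha) (by omega) h0; omega
      omega
    have ha_le : t ≤ a ∨ h a ≤ 0 := or_iff_not_imp_left.2 fun hta =>
      hht ▸ hh.monotoneOn ha htD (by omega)
    have hb_ge : b ≤ -t ∨ 0 ≤ h b := or_iff_not_imp_left.2 fun htb => by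
      have := hh.monotoneOn (hh.neg_mem t htD) hb (by omega)
      have := hh.map_neg t htD
      omega
    unfold liftAbove at heq
    split_ifs at heq ⊢ <;> omega

lemma gapFree_liftAbove (hh : Admissible n D h) (hgap : GapFree D h) (htD : t ∈ D)
    (ht : 0 < t) (hht : h t = 0) : GapFree D (liftAbove h t) := by
  intro b hb hb2
  unfold liftAbove at hb2 ⊢
  by_cases htb : t ≤ b
  · rw [if_pos htb] at hb2 ⊢
    rcases (show h b = 1 ∨ 2 ≤ h b by omega) with h1 | h2
    · exact ⟨t, htD, by simp only [if_pos le_rfl]; omega⟩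
    · obtain ⟨a, ha, hab⟩ := hgap b hb h2
      have := hh.lt_of_map_lt htD ha (by omega)
      exact ⟨a, ha, by rw [if_pos this.le]; omega⟩
  · by_cases hbt : b ≤ -t
    · have := hh.nonpos hb (by omega)
      rw [if_neg htb, if_pos hbt] at hb2
      omega
    · have := hh.map_eq_zero_of_neg_lt_of_lt htD hht hb (by omega) (by omega)
      rw [if_neg htb, if_neg hbt] at hb2
      omega

lemma towardZero_liftAbove (hh : Admissible n D h) (htD : t ∈ D) (ht : 0 < t) (hht : h t = 0)
    {a : ℤ} (ha : a ∈ D) : towardZero (liftAbove h t a) = h a := by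
  unfold liftAbove towardZero
  by_cases hta : t ≤ a
  · have := hh.nonneg ha (by omega)
    simp only [if_pos hta]
    split_ifs <;> omega
  by_cases hat : a ≤ -t
  · have := hh.nonpos ha (by omega)
    simp only [if_neg hta, if_pos hat]
    split_ifs <;> omega
  · have := hh.map_eq_zero_of_neg_lt_of_lt htD hht ha (by omega) (by omega)
    simp only [if_neg hta, if_neg hat]
    split_ifs <;> omega

lemma posSum_liftAbove_lt (hh : Admissible n D h) (htD : t ∈ D) (ht : 0 < t) (hht : h t = 0) :
    posSum n D (fun a => n - liftAbove h t a) < posSum n D (fun a => n - h a) := by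
  have := (hh.subset htD).2
  refine posSum_lt_posSum (fun k _ hk => ?_) htD ht this ?_ (by omega) <;>
    unfold liftAbove <;> split_ifs <;> omega

end liftAbove

def zeroAtOne (h : ℤ → ℤ) (a : ℤ) : ℤ := if a = 1 ∨ a = -1 then 0 else h a

section insertOne

variable {D : Set ℤ} {h : ℤ → ℤ}

lemma mem_insert_one_iff {a : ℤ} : a ∈ insert 1 (insert (-1) D) ↔ a = 1 ∨ a = -1 ∨ a ∈ D := by
  simp only [mem_insert_iff]

lemma Admissible.not_eq_one_or_eq_neg_one (hh : Admissible n D h) (h1 : (1 : ℤ) ∉ D) {a : ℤ}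
    (ha : a ∈ D) : ¬(a = 1 ∨ a = -1) := by
  rintro (rfl | rfl)
  · exact h1 ha
  · exact h1 (by simpa using hh.neg_mem _ ha)

lemma zeroAtOne_cases (hh : Admissible n D h) (h1 : (1 : ℤ) ∉ D) {a : ℤ}
    (ha : a ∈ insert 1 (insert (-1) D)) :
    ((a = 1 ∨ a = -1) ∧ zeroAtOne h a = 0) ∨
      (a ∈ D ∧ ¬(a = 1 ∨ a = -1) ∧ zeroAtOne h a = h a) := by
  rcases mem_insert_one_iff.1 ha with rfl | rfl | ha
  · simp [zeroAtOne]
  · simp [zeroAtOne]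
  · have := hh.not_eq_one_or_eq_neg_one h1 ha
    exact Or.inr ⟨ha, this, if_neg this⟩

lemma admissible_insert_one (hh : Admissible n D h) (h1 : (1 : ℤ) ∉ D) (hn : (1 : ℤ) ≤ n) :
    Admissible n (insert 1 (insert (-1) D)) (zeroAtOne h) := by
  have hsign : ∀ a ∈ D, (0 < a ∨ h a ≤ 0) ∧ (a < 0 ∨ 0 ≤ h a) := fun a ha =>
    ⟨or_iff_not_imp_left.2 fun ha0 => hh.nonpos ha (by omega),
      or_iff_not_imp_left.2 fun ha0 => hh.nonneg ha (by omega)⟩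
  refine ⟨fun a ha => ?_, fun a ha => ?_, fun a ha => ?_, fun a ha b hb hab => ?_,
    fun a ha => ?_, fun a ha b hb hab heq => ?_⟩
  · rcases zeroAtOne_cases hh h1 ha with ⟨ha1, -⟩ | ⟨ha, -⟩
    · rw [mem_Zodd]; omega
    · exact hh.subset ha
  · rcases zeroAtOne_cases hh h1 ha with ⟨ha1, -⟩ | ⟨ha, -⟩
    · rw [mem_insert_one_iff]; omega
    · exact mem_insert_one_iff.2 (Or.inr (Or.inr (hh.neg_mem a ha)))
  · rcases zeroAtOne_cases hh h1 ha with ⟨-, h0⟩ | ⟨ha, -, h'⟩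
    · rw [h0, mem_Zodd]; omega
    · exact h' ▸ hh.mapsTo ha
  · rcases zeroAtOne_cases hh h1 ha with ⟨ha1, ha'⟩ | ⟨haD, ha1, ha'⟩ <;>
      rcases zeroAtOne_cases hh h1 hb with ⟨hb1, hb'⟩ | ⟨hbD, hb1, hb'⟩
    · omega
    · have := hsign b hbD; omega
    · have := hsign a haD; omega
    · have := hh.monotoneOn haD hbD hab; omega
  · unfold zeroAtOne
    rcases zeroAtOne_cases hh h1 ha with ⟨ha1, -⟩ | ⟨ha, ha1, -⟩
    · rw [if_pos ha1, if_pos (by omega), neg_zero]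
    · rw [if_neg ha1, if_neg (by omega), hh.map_neg a ha]
  · rcases zeroAtOne_cases hh h1 ha with ⟨-, ha'⟩ | ⟨haD, -, ha'⟩
    · exact ha'
    rcases zeroAtOne_cases hh h1 hb with ⟨-, hb'⟩ | ⟨hbD, -, hb'⟩
    · exact heq.trans hb'
    · rw [ha'] at heq ⊢
      exact hh.eq_zero_of_lt a haD b hbD hab (heq.trans hb')

lemma gapFree_insert_one (hh : Admissible n D h) (hgap : GapFree D h) (h1 : (1 : ℤ) ∉ D) :
    GapFree (insert 1 (insert (-1) D)) (zeroAtOne h) := by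
  intro b hb hb2
  rcases zeroAtOne_cases hh h1 hb with ⟨-, h0⟩ | ⟨hb, -, hb'⟩
  · omega
  obtain ⟨a, ha, hab⟩ := hgap b hb (hb' ▸ hb2)
  refine ⟨a, mem_insert_one_iff.2 (Or.inr (Or.inr ha)), ?_⟩
  rw [zeroAtOne, if_neg (hh.not_eq_one_or_eq_neg_one h1 ha), hab, hb']

lemma realizable_of_insert_one (hh : Admissible n D h) (h1 : (1 : ℤ) ∉ D) (hn : 1 ≤ n)
    (hrec : RealizableOrId n (insert 1 (insert (-1) D)) (zeroAtOne h)) : Realizable n D h := by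
  refine hrec.comp_right (realizable_id_compl_one hn) (fun a => ⟨fun ha => ?_, ?_⟩)
    fun a ha => by simp only [zeroAtOne, id, if_neg (hh.not_eq_one_or_eq_neg_one h1 ha)]
  · simpa [hh.subset ha, mem_insert_one_iff, ha] using hh.not_eq_one_or_eq_neg_one h1 ha
  · rintro ⟨⟨-, ha⟩, ha'⟩
    simp only [id, mem_insert_iff, mem_singleton_iff] at ha ha'
    tauto

end insertOne

section raiseImage

variable {D : Set ℤ} {h : ℤ → ℤ} {x : ℤ}

lemma lower_raise_of_mem (hh : Admissible n D h) (hx : 2 ≤ x) (hxD : x ∉ D) {d : ℤ}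
    (hd : d ∈ D) : lower x (raise x d) = d :=
  lower_raise hx (ne_of_mem_of_not_mem hd hxD)
    (ne_of_mem_of_not_mem hd fun hc => hxD (by simpa using hh.neg_mem _ hc))

lemma admissible_raise_image (hh : Admissible n D h) (hx : 2 ≤ x) (hxn : x ≤ n)
    (hxD : x ∉ D) : Admissible n (raise x '' D) (h ∘ lower x) := by
  refine hh.comp_right ?_ ?_ ((lower_strictMonoOn hx).mono ?_)
    (fun a _ => lower_neg (by omega) a) ?_
  · rintro _ ⟨d, hd, rfl⟩
    exact raise_mem_Zodd hxn (hh.subset hd)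
  · rintro _ ⟨d, hd, rfl⟩
    exact ⟨-d, hh.neg_mem d hd, raise_neg (by omega) d⟩
  · rintro _ ⟨d, -, rfl⟩
    exact raise_ne (by omega) d
  · rintro _ ⟨d, hd, rfl⟩
    rwa [lower_raise_of_mem hh hx hxD hd]

lemma gapFree_raise_image (hh : Admissible n D h) (hgap : GapFree D h) (hx : 2 ≤ x)
    (hxD : x ∉ D) : GapFree (raise x '' D) (h ∘ lower x) := by
  refine hgap.comp_right ?_
    fun d hd => ⟨raise x d, ⟨d, hd, rfl⟩, lower_raise_of_mem hh hx hxD hd⟩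
  rintro _ ⟨d, hd, rfl⟩
  rwa [lower_raise_of_mem hh hx hxD hd]

lemma holeWeight_raise_image_lt (hx : 2 ≤ x) (hxn : x ≤ n)
    (hxD : x ∉ D) (hx1D : x - 1 ∈ D) : holeWeight n (raise x '' D) < holeWeight n D := by
  refine holeWeight_lt_of_move hx hxn hxD hx1D ⟨x - 1, hx1D, by simp [raise]⟩ ?_ ?_
  · rintro ⟨d, hd, hdx⟩
    exact (raise_ne (by omega) d).1 hdx
  · intro k hk hkx hkx1
    constructor
    · rintro ⟨d, hd, rfl⟩
      have : raise x d = d := by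
        unfold raise at hk hkx hkx1 ⊢
        split_ifs at hk hkx hkx1 ⊢ <;> omega
      rwa [this]
    · intro hk'
      exact ⟨k, hk', by unfold raise; split_ifs <;> omega⟩

lemma realizable_of_raise_image (hh : Admissible n D h) (hx : 2 ≤ x) (hxn : x ≤ n)
    (hxD : x ∉ D) (hrec : RealizableOrId n (raise x '' D) (h ∘ lower x)) :
    Realizable n D h := by
  have hne : ∀ a ∈ D, a ≠ x ∧ a ≠ -x := fun a ha => ⟨ne_of_mem_of_not_mem ha hxD,
    ne_of_mem_of_not_mem ha fun hc => hxD (by simpa using hh.neg_mem _ hc)⟩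
  refine hrec.comp_right (realizable_raise hx hxn) (fun a => ⟨fun ha => ?_, ?_⟩)
    fun a ha => by rw [Function.comp_apply, lower_raise_of_mem hh hx hxD ha]
  · simpa [hh.subset ha, (hne a ha).1, (hne a ha).2] using ⟨a, ha, rfl⟩
  · rintro ⟨⟨-, hax⟩, d, hd, hda⟩
    simp only [mem_insert_iff, mem_singleton_iff, not_or] at hax
    rwa [← lower_raise hx hax.1 hax.2, ← hda, lower_raise_of_mem hh hx hxD hd]

end raiseImage

lemma Admissible.map_eq_self {D : Set ℤ} {h : ℤ → ℤ} (hh : Admissible n D h) (hgap : GapFree D h)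
    (hzero : ∀ a ∈ D, 0 < a → h a ≠ 0) (hfull : ∀ x : ℤ, 0 < x → x ≤ n → x ∈ D) {a : ℤ}
    (ha : a ∈ D) : h a = a := by
  have hge : ∀ k : ℕ, (k : ℤ) + 1 ≤ n → (k : ℤ) + 1 ≤ h (k + 1) := by
    intro k
    induction k with
    | zero =>
      intro hk
      have h1 := hfull 1 one_pos (by simpa using hk)
      have := hh.nonneg h1 zero_le_one
      have := hzero 1 h1 one_pos
      simp only [Nat.cast_zero, zero_add]
      omega
    | succ k ih =>
      intro hk
      push_cast at hk ⊢
      have hk1 := hfull (k + 1) (by omega) (by omega)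
      have hk2 := hfull (k + 1 + 1) (by omega) hk
      have := ih (by omega)
      have := hh.monotoneOn hk1 hk2 (by omega)
      have := hzero _ hk1 (by omega)
      have := hh.eq_zero_of_lt _ hk1 _ hk2 (by omega)
      omega
  have hpos : ∀ b ∈ D, 0 < b → h b = b := fun b hb hb0 => by
    have hle := hgap.map_add_le hh (c := 0) (fun b hb hb1 => hh.pos_of_map_pos hb (by omega)) hb
      ((hh.nonneg hb hb0.le).lt_of_ne (hzero b hb hb0).symm)
    have := hge (b - 1).toNat (by have := (hh.subset hb).2; omega)
    rw [show ((b - 1).toNat : ℤ) + 1 = b by omega] at this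
    omega
  rcases lt_trichotomy a 0 with ha0 | rfl | ha0
  · have := hpos (-a) (hh.neg_mem a ha) (by omega)
    have := hh.map_neg a ha
    omega
  · exact hh.map_zero ha
  · exact hpos a ha ha0

lemma realizableOrId_of_eqOn_id {D : Set ℤ} {h : ℤ → ℤ} (hsub : D ⊆ Zodd n)
    (hneg : ∀ a ∈ D, -a ∈ D) (hfull : ∀ x : ℤ, 0 < x → x ≤ n → x ∈ D)
    (hid : ∀ a ∈ D, h a = a) : RealizableOrId n D h := by
  have hmem : ∀ x ∈ Zodd n, x ≠ 0 → x ∈ D := fun x hx hx0 => by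
    rw [mem_Zodd] at hx
    rcases lt_or_gt_of_ne hx0 with hx0 | hx0
    · simpa using hneg _ (hfull (-x) (by omega) (by omega))
    · exact hfull x hx0 hx.2
  by_cases h0 : (0 : ℤ) ∈ D
  · refine Or.inr ⟨Subset.antisymm hsub fun x hx => ?_, hid⟩
    by_cases hx0 : x = 0
    · exact hx0 ▸ h0
    · exact hmem x hx hx0
  · have hD : Zodd n \ {0} = D := Set.ext fun x => ⟨fun ⟨hx, hx0⟩ => hmem x hx hx0,
      fun hx => ⟨hsub hx, fun hx0 => h0 (hx0 ▸ hx)⟩⟩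
    exact Or.inl (realizable_id_compl_zero.congr hD fun x hx => (hid x (hD ▸ hx)).symm)

theorem realizableOrId_of_gapFree (D : Set ℤ) (h : ℤ → ℤ) (hh : Admissible n D h)
    (hgap : GapFree D h) : RealizableOrId n D h := by
  classical
  by_cases hzero : ∃ t ∈ D, 0 < t ∧ h t = 0
  · obtain ⟨t, ⟨htD, ht, hht⟩, htmax⟩ := Int.exists_greatest_of_bdd
      ⟨n, fun t ht => (hh.subset ht.1).2⟩ hzero
    have hlift := admissible_liftAbove hh hgap htD ht hht
      fun a ha ha0 hha => htmax a ⟨ha, ha0, hha⟩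
    have := posSum_liftAbove_lt hh htD ht hht
    have hrec := realizableOrId_of_gapFree D _ hlift (gapFree_liftAbove hh hgap htD ht hht)
    exact Or.inl (hrec.comp_left realizable_towardZero hlift.mapsTo
      fun a ha => (towardZero_liftAbove hh htD ht hht ha).symm)
  push Not at hzero
  by_cases hhole : ∃ x : ℤ, (0 < x ∧ x ≤ n) ∧ x ∉ D
  · obtain ⟨x, ⟨⟨hx0, hxn⟩, hxD⟩, hxmin⟩ := Int.exists_least_of_bdd
      ⟨0, fun x hx => hx.1.1.le⟩ hhole
    rcases (show x = 1 ∨ 2 ≤ x by omega) with rfl | hx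
    · have := holeWeight_lt_of_subset (subset_insert _ _ |>.trans (subset_insert _ _))
        (mem_insert (1 : ℤ) (insert (-1) D)) hxD one_pos hxn
      exact Or.inl (realizable_of_insert_one hh hxD (by omega) (realizableOrId_of_gapFree _ _
        (admissible_insert_one hh hxD hxn) (gapFree_insert_one hh hgap hxD)))
    · have hx1D : x - 1 ∈ D := by
        by_contra hc
        have := hxmin (x - 1) ⟨⟨by omega, by omega⟩, hc⟩
        omega
      have := holeWeight_raise_image_lt hx hxn hxD hx1D
      exact Or.inl (realizable_of_raise_image hh hx hxn hxD (realizableOrId_of_gapFree _ _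
        (admissible_raise_image hh hx hxn hxD) (gapFree_raise_image hh hgap hx hxD)))
  · push Not at hhole
    have hfull : ∀ x : ℤ, 0 < x → x ≤ n → x ∈ D := fun x hx0 hxn => hhole x ⟨hx0, hxn⟩
    exact realizableOrId_of_eqOn_id hh.subset hh.neg_mem hfull
      fun a ha => hh.map_eq_self hgap hzero hfull ha
termination_by (holeWeight n D, posSum n D (fun a => n - h a))

theorem realizableOrId_of_admissible (D : Set ℤ) (h : ℤ → ℤ) (hh : Admissible n D h) :
    RealizableOrId n D h := by
  by_cases hgap : GapFree D h
  · exact realizableOrId_of_gapFree D h hh hgap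
  obtain ⟨b, hb, hv, hgapb⟩ : ∃ b ∈ D, 2 ≤ h b ∧ ∀ a ∈ D, h a ≠ h b - 1 := by
    simpa [GapFree] using hgap
  have hvn : h b ≤ n := (hh.mapsTo hb).2
  have hW : ∀ a ∈ D, h a ≠ h b - 1 ∧ h a ≠ -(h b - 1) := fun a ha =>
    ⟨hgapb a ha, fun hc => hgapb (-a) (hh.neg_mem a ha) (by rw [hh.map_neg a ha]; omega)⟩
  have hlow : Admissible n D (lower (h b) ∘ h) := hh.comp_left
    ((lower_strictMonoOn hv).mono (by rintro _ ⟨a, ha, rfl⟩; exact hW a ha))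
    (fun _ _ => lower_neg (by omega) _)
    fun a ha => lower_mem_Zodd (by omega) (hh.mapsTo ha)
  have : posSum n D (lower (h b) ∘ h) < posSum n D h :=
    posSum_lt_posSum (fun k hk hk0 => lower_le (by omega) (hh.nonneg hk hk0.le)) hb
      (hh.pos_of_map_pos hb (by omega)) (hh.subset hb).2 (by simp [lower]) (by omega)
  exact Or.inl ((realizableOrId_of_admissible D _ hlow).comp_left (realizable_raise hv hvn)
    (fun _ ha => ⟨hlow.mapsTo ha, by simpa using lower_ne (by omega) _⟩)
    fun a ha => (raise_lower hv (hW a ha).1 (hW a ha).2).symm)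
termination_by posSum n D h

end Sugihara

theorem stmt8_general (n : ℕ) (D : Set ℤ) (h : ℤ → ℤ)
    (hpe : PartialEnd (Zodd n) D h)
    (hid : ¬(D = Zodd n ∧ ∀ a ∈ D, h a = a)) :
    ∃ φ : ℤ →. ℤ, FinComp (GenOdd n) φ ∧ φ.Dom = D ∧ ∀ a ∈ D, h a ∈ φ a :=
  ⟨PFun.res h D, (Sugihara.realizableOrId_of_admissible D h hpe.admissible).resolve_right hid,
    rfl, fun _ ha => (PFun.mem_res _ _ _ _).2 ⟨ha, rfl⟩⟩

theorem stmt8 (n : ℕ) (hn : 1 ≤ n) (D : Set ℤ) (h : ℤ → ℤ)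
    (hpe : PartialEnd (Zodd n) D h)
    (hid : ¬(D = Zodd n ∧ ∀ a ∈ D, h a = a)) :
    ∃ φ : ℤ →. ℤ, FinComp (GenOdd n) φ ∧ φ.Dom = D ∧ ∀ a ∈ D, h a ∈ φ a :=
  stmt8_general n D h hpe hid
end

section
/- Let n ≥ 1 and let a ≠ b be elements of Z_{2n+1}. Then there exists a natural number k such that δ⁺(g^k(a)) ≠ δ⁺(g^k(b)) or δ⁻(g^k(a)) ≠ δ⁻(g^k(b)), where g^k denotes the k-fold iterate of g. -/
/-- The endomorphism `g` of `Z_{2n+1}`, as a total function on `ℤ`. -/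
def gOFun (a : ℤ) : ℤ := if 0 < a then a - 1 else if a < 0 then a + 1 else 0

/-- The map `δ⁺`. -/
def delp (a : ℤ) : ℤ := if 1 ≤ a then 1 else 0

/-- The map `δ⁻`. -/
def delm (a : ℤ) : ℤ := if 0 ≤ a then 1 else 0

/-!
The map `g` moves every element one step towards `0` and then stays there. For `0 ≤ a < b`, after
`b - 1` steps `b` has reached `1` and `a` has reached `0`, which `δ⁺` separates. Since `g` commutes
with negation and `δ⁻ x = 1 - δ⁺ (-x)`, the case `a < b ≤ 0` is the mirror image, and elements of
opposite signs are already separated by `δ⁻`.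
-/

lemma gOFun_neg (a : ℤ) : gOFun (-a) = -gOFun a := by
  unfold gOFun
  split_ifs <;> omega

lemma iterate_gOFun_neg (k : ℕ) (a : ℤ) : gOFun^[k] (-a) = -gOFun^[k] a :=
  ((Function.Semiconj.iterate_right (f := Neg.neg) (fun x => (gOFun_neg x).symm) k) a).symm

lemma delm_eq_one_sub_delp_neg (a : ℤ) : delm a = 1 - delp (-a) := by
  unfold delm delp
  split_ifs <;> omega

lemma iterate_gOFun_of_nonneg (k : ℕ) {a : ℤ} (ha : 0 ≤ a) : gOFun^[k] a = max (a - k) 0 := by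
  induction k generalizing a with
  | zero => simpa using ha
  | succ k ih =>
    have hg : gOFun a = max (a - 1) 0 := by
      unfold gOFun
      split_ifs <;> omega
    rw [Function.iterate_succ_apply, hg, ih (le_max_right _ _)]
    omega

lemma exists_delp_iterate_ne_of_nonneg_of_lt {a b : ℤ} (ha : 0 ≤ a) (hab : a < b) :
    ∃ k : ℕ, delp (gOFun^[k] a) ≠ delp (gOFun^[k] b) := by
  refine ⟨(b - 1).toNat, ?_⟩
  rw [iterate_gOFun_of_nonneg _ ha, iterate_gOFun_of_nonneg _ (ha.trans hab.le),
    Int.toNat_of_nonneg (by omega)]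
  unfold delp
  split_ifs <;> omega

lemma exists_delm_iterate_ne_of_lt_of_nonpos {a b : ℤ} (hab : a < b) (hb : b ≤ 0) :
    ∃ k : ℕ, delm (gOFun^[k] a) ≠ delm (gOFun^[k] b) := by
  obtain ⟨k, hk⟩ := exists_delp_iterate_ne_of_nonneg_of_lt (neg_nonneg.mpr hb) (neg_lt_neg hab)
  refine ⟨k, fun h => hk ?_⟩
  rw [delm_eq_one_sub_delp_neg, delm_eq_one_sub_delp_neg] at h
  rw [iterate_gOFun_neg, iterate_gOFun_neg]
  omega

theorem stmt9_general (a b : ℤ)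
    (hab : a ≠ b) :
    ∃ k : ℕ,
      delp (gOFun^[k] a) ≠ delp (gOFun^[k] b) ∨ delm (gOFun^[k] a) ≠ delm (gOFun^[k] b) := by
  wlog hlt : a < b generalizing a b
  · obtain ⟨k, hk⟩ := this b a hab.symm (hab.lt_or_gt.resolve_left hlt)
    exact ⟨k, hk.imp Ne.symm Ne.symm⟩
  rcases le_or_gt 0 a with ha | ha
  · exact (exists_delp_iterate_ne_of_nonneg_of_lt ha hlt).imp fun _ => Or.inl
  rcases le_or_gt b 0 with hb | hb
  · exact (exists_delm_iterate_ne_of_lt_of_nonpos hlt hb).imp fun _ => Or.inr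
  refine ⟨0, Or.inr ?_⟩
  simp only [Function.iterate_zero_apply, delm]
  split_ifs <;> omega

theorem stmt9 (n : ℕ) (hn : 1 ≤ n) (a b : ℤ) (ha : a ∈ Zodd n) (hb : b ∈ Zodd n)
    (hab : a ≠ b) :
    ∃ k : ℕ,
      delp (gOFun^[k] a) ≠ delp (gOFun^[k] b) ∨ delm (gOFun^[k] a) ≠ delm (gOFun^[k] b) :=
  stmt9_general a b hab
end

section
/- Let n ≥ 2, let S be a subalgebra of Z_{2n}² (a nonempty subset of Z_{2n} × Z_{2n} closed under the coordinatewise operations ∧, ∨, ¬, →), and let i, j ∈ {1,…,n−1}. Then: (i) S ⊆ (β_i⁺, β_j⁺)⁻¹(≤) if and only if Sˇ ⊆ (β_j⁻, β_i⁻)⁻¹(≤), where Sˇ = {(b,a) : (a,b) ∈ S}; (ii) S ⊆ (β_i⁺, β)⁻¹(≤) if and only if Sˇ ⊆ (β, β_i⁻)⁻¹(≤), and S ⊆ (β_i⁻, β)⁻¹(≤) if and only if Sˇ ⊆ (β, β_i⁺)⁻¹(≤); (iii) S ⊆ (β_i⁺, β_j⁻)⁻¹(≤) if and only if S ⊆ (β_i⁺,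 β_j⁺)⁻¹(≤) or S ⊆ (β_i⁻, β_j⁻)⁻¹(≤). -/
/-- `S` is a subalgebra of `Z²` (coordinatewise operations). -/
def Subalg2 (Z : Set ℤ) (S : Set (ℤ × ℤ)) : Prop :=
  S.Nonempty ∧ S ⊆ Z ×ˢ Z ∧
    ∀ p ∈ S, ∀ q ∈ S,
      (min p.1 q.1, min p.2 q.2) ∈ S ∧ (max p.1 q.1, max p.2 q.2) ∈ S ∧
      (-p.1, -p.2) ∈ S ∧ (SImp p.1 q.1, SImp p.2 q.2) ∈ S

/-- The map `β_i⁻`. -/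
def betaM (i : ℕ) (a : ℤ) : ℤ := if -(i : ℤ) ≤ a then 1 else 0

/-- The map `β_i⁺`. -/
def betaP (i : ℕ) (a : ℤ) : ℤ := if (i : ℤ) < a then 1 else 0

/-- The map `β`. -/
def betaF (a : ℤ) : ℤ := if 0 < a then 1 else 0

/-!
Negation is an involution of `S` that exchanges `β_i⁺` with `1 - β_i⁻` and, away from `0`,
`β` with `1 - β`; this gives (i) and (ii). For (iii), if `(a, b)` and `(c, d)` in `S` witness the
failure of both alternatives, then `(a, b) → (-c, -d)` is `(e, -d)` with `e ≤ -a`, and its negation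
`(-e, d)` violates the hypothesis.
-/

lemma ite_one_zero_le_ite_one_zero_iff {P Q : Prop} [Decidable P] [Decidable Q] :
    ((if P then (1 : ℤ) else 0) ≤ if Q then 1 else 0) ↔ (P → Q) := by
  split_ifs <;> simp_all

lemma betaP_neg (i : ℕ) (a : ℤ) : betaP i (-a) = 1 - betaM i a := by
  unfold betaP betaM
  split_ifs <;> omega

lemma betaM_neg (i : ℕ) (a : ℤ) : betaM i (-a) = 1 - betaP i a := by
  unfold betaP betaM
  split_ifs <;> omega

lemma betaF_neg {a : ℤ} (ha : a ≠ 0) : betaF (-a) = 1 - betaF a := by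
  unfold betaF
  split_ifs <;> omega

lemma betaP_le_betaM (i : ℕ) (a : ℤ) : betaP i a ≤ betaM i a := by
  unfold betaP betaM
  split_ifs <;> omega

lemma SImp_le_neg_of_lt {a b : ℤ} (h : b < a) : SImp a b ≤ -a := by
  rw [SImp, if_neg h.not_ge]
  exact min_le_left _ _

lemma SImp_eq_of_abs_le {a b : ℤ} (h : |a| ≤ b) : SImp a b = b := by
  rw [SImp, if_pos ((le_abs_self a).trans h)]
  exact max_eq_right ((neg_le_abs a).trans h)

namespace Subalg2

variable {Z : Set ℤ} {S : Set (ℤ × ℤ)}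

lemma neg_mem (hS : Subalg2 Z S) {p : ℤ × ℤ} (hp : p ∈ S) : -p ∈ S :=
  (hS.2.2 p hp p hp).2.2.1

lemma sImp_mem (hS : Subalg2 Z S) {p q : ℤ × ℤ} (hp : p ∈ S) (hq : q ∈ S) :
    (SImp p.1 q.1, SImp p.2 q.2) ∈ S :=
  (hS.2.2 p hp q hq).2.2.2

lemma snd_ne_zero {n : ℕ} (hS : Subalg2 (Zeven n) S) {p : ℤ × ℤ} (hp : p ∈ S) : p.2 ≠ 0 :=
  (hS.2.1 hp).2.2

lemma forall_le_iff_forall_swap_le (hS : Subalg2 Z S) {f g f' g' : ℤ → ℤ}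
    (hf : ∀ p ∈ S, f (-p.1) = 1 - f' p.1) (hg : ∀ p ∈ S, g (-p.2) = 1 - g' p.2) :
    (∀ p ∈ S, f p.1 ≤ g p.2) ↔ ∀ p ∈ Prod.swap '' S, g' p.1 ≤ f' p.2 := by
  rw [Set.forall_mem_image]
  constructor
  · intro h p hp
    have := h (-p) (hS.neg_mem hp)
    rw [Prod.fst_neg, Prod.snd_neg, hf p hp, hg p hp, sub_le_sub_iff_left] at this
    exact this
  · intro h p hp
    have := h (hS.neg_mem hp)
    rw [Prod.fst_swap, Prod.snd_swap, Prod.fst_neg, Prod.snd_neg] at this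
    have hf' := hf (-p) (hS.neg_mem hp)
    have hg' := hg (-p) (hS.neg_mem hp)
    simp only [Prod.fst_neg, Prod.snd_neg, neg_neg] at hf' hg'
    linarith

lemma forall_betaP_le_betaM_iff (hS : Subalg2 Z S) (i j : ℕ) :
    (∀ p ∈ S, betaP i p.1 ≤ betaM j p.2) ↔
      (∀ p ∈ S, betaP i p.1 ≤ betaP j p.2) ∨ ∀ p ∈ S, betaM i p.1 ≤ betaM j p.2 := by
  constructor
  · simp only [betaP, betaM, ite_one_zero_le_ite_one_zero_iff]
    intro h
    by_contra! ⟨⟨p, hp, hp₁, hp₂⟩, ⟨q, hq, hq₁, hq₂⟩⟩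
    have hr : (SImp p.1 (-q.1), SImp p.2 (-q.2)) ∈ S := hS.sImp_mem hp (hS.neg_mem hq)
    have hr₁ : SImp p.1 (-q.1) ≤ -p.1 := SImp_le_neg_of_lt (by omega)
    have hr₂ : SImp p.2 (-q.2) = -q.2 :=
      SImp_eq_of_abs_le (abs_le.2 ⟨by linarith [h p hp hp₁], by omega⟩)
    have := h _ (hS.neg_mem hr) (by simp only [Prod.fst_neg]; omega)
    rw [Prod.snd_neg, hr₂] at this
    omega
  · rintro (h | h) p hp
    exacts [(h p hp).trans (betaP_le_betaM j _), (betaP_le_betaM i _).trans (h p hp)]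

end Subalg2

theorem stmt11_general (n : ℕ) (S : Set (ℤ × ℤ)) (hS : Subalg2 (Zeven n) S)
    (i j : ℕ) :
    ((∀ p ∈ S, betaP i p.1 ≤ betaP j p.2) ↔
      (∀ p ∈ Prod.swap '' S, betaM j p.1 ≤ betaM i p.2)) ∧
    ((∀ p ∈ S, betaP i p.1 ≤ betaF p.2) ↔
      (∀ p ∈ Prod.swap '' S, betaF p.1 ≤ betaM i p.2)) ∧
    ((∀ p ∈ S, betaM i p.1 ≤ betaF p.2) ↔
      (∀ p ∈ Prod.swap '' S, betaF p.1 ≤ betaP i p.2)) ∧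
    ((∀ p ∈ S, betaP i p.1 ≤ betaM j p.2) ↔
      ((∀ p ∈ S, betaP i p.1 ≤ betaP j p.2) ∨ (∀ p ∈ S, betaM i p.1 ≤ betaM j p.2))) :=
  ⟨hS.forall_le_iff_forall_swap_le (fun _ _ ↦ betaP_neg i _) (fun _ _ ↦ betaP_neg j _),
    hS.forall_le_iff_forall_swap_le (fun _ _ ↦ betaP_neg i _)
      (fun _ hp ↦ betaF_neg (hS.snd_ne_zero hp)),
    hS.forall_le_iff_forall_swap_le (fun _ _ ↦ betaM_neg i _)
      (fun _ hp ↦ betaF_neg (hS.snd_ne_zero hp)),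
    hS.forall_betaP_le_betaM_iff i j⟩

theorem stmt11 (n : ℕ) (hn : 2 ≤ n) (S : Set (ℤ × ℤ)) (hS : Subalg2 (Zeven n) S)
    (i j : ℕ) (hi1 : 1 ≤ i) (hi2 : i ≤ n - 1) (hj1 : 1 ≤ j) (hj2 : j ≤ n - 1) :
    ((∀ p ∈ S, betaP i p.1 ≤ betaP j p.2) ↔
      (∀ p ∈ Prod.swap '' S, betaM j p.1 ≤ betaM i p.2)) ∧
    ((∀ p ∈ S, betaP i p.1 ≤ betaF p.2) ↔
      (∀ p ∈ Prod.swap '' S, betaF p.1 ≤ betaM i p.2)) ∧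
    ((∀ p ∈ S, betaM i p.1 ≤ betaF p.2) ↔
      (∀ p ∈ Prod.swap '' S, betaF p.1 ≤ betaP i p.2)) ∧
    ((∀ p ∈ S, betaP i p.1 ≤ betaM j p.2) ↔
      ((∀ p ∈ S, betaP i p.1 ≤ betaP j p.2) ∨ (∀ p ∈ S, betaM i p.1 ≤ betaM j p.2))) :=
  stmt11_general n S hS i j
end
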